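/- arXiv:2401.08828 — 7 statements merged into one kernel-verified Lean document; each statement's English description precedes it below -/
import Mathlib

section
/- Let G be an abelian group of order 2^r with r > 0, and let M be a finite module over the group algebra F_2[G]. Writing N_G = \sum_{g \in G} g \in F_2[G], M^G for the submodule of G-fixed elements of M, and N_G\cdot M for the image of M under the action of N_G, one has dim_{F_2} M \le (2^r - 1)\,dim_{F_2} M^G + dim_{F_2}(N_G\cdot M). -/
noncomputable section

/-- The submodule of `G`-fixed points of an `F₂[G]`-module `M`. -/
def fixedPointsSubmodule (G M : Type*) [Monoid G] [AddCommGroup M] [Module (ZMod 2) M]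
    [DistribMulAction G M] [SMulCommClass G (ZMod 2) M] : Submodule (ZMod 2) M where
  carrier := {m : M | ∀ g : G, g • m = m}
  add_mem' := by
    intro a b ha hb g
    rw [smul_add, ha g, hb g]
  zero_mem' := fun g => smul_zero g
  smul_mem' := by
    intro t m hm g
    rw [smul_comm, hm g]

/-- The `F₂`-linear map `m ↦ N_G • m = ∑_{g ∈ G} g • m` given by the norm element of `F₂[G]`. -/
def normLinearMap (G M : Type*) [Monoid G] [Fintype G] [AddCommGroup M] [Module (ZMod 2) M]
    [DistribMulAction G M] [SMulCommClass G (ZMod 2) M] : M →ₗ[ZMod 2] M where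
  toFun m := ∑ g : G, g • m
  map_add' a b := by
    simp [smul_add, Finset.sum_add_distrib]
  map_smul' t m := by
    simp only [RingHom.id_apply, Finset.smul_sum]
    exact Finset.sum_congr rfl fun g _ => smul_comm g t m

universe u v

theorem my_neg_eq_self {M : Type v} [AddCommGroup M] [Module (ZMod 2) M] (m : M) : -m = m := by
  calc -m = (-1 : ZMod 2) • m := (neg_one_smul _ m).symm
    _ = (1 : ZMod 2) • m := by rw [show (-1 : ZMod 2) = 1 by decide]
    _ = m := one_smul _ m

theorem my_eq_of_ne_one {Q : Type u} [Group Q] [Fintype Q] (hQ : Fintype.card Q = 2)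
    {a b : Q} (ha : a ≠ 1) (hb : b ≠ 1) : a = b := by
  classical
  by_contra h
  have h3 : ({a, b, (1 : Q)} : Finset Q).card = 3 := by
    rw [Finset.card_insert_of_notMem (by simp [h, ha]),
      Finset.card_insert_of_notMem (by simp [hb]), Finset.card_singleton]
  have h4 := Finset.card_le_univ ({a, b, (1 : Q)} : Finset Q)
  rw [h3, hQ] at h4
  omega

theorem my_mem_fixed_iff {G : Type u} {M : Type v} [Monoid G] [AddCommGroup M]
    [Module (ZMod 2) M] [DistribMulAction G M] [SMulCommClass G (ZMod 2) M] (m : M) :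
    m ∈ fixedPointsSubmodule G M ↔ ∀ g : G, g • m = m := Iff.rfl

theorem my_norm_fixed {G : Type u} [Group G] [Fintype G]
    {M : Type v} [AddCommGroup M] [DistribMulAction G M] (g : G) (m : M) :
    g • (∑ x : G, x • m) = ∑ x : G, x • m := by
  rw [Finset.smul_sum]
  exact Fintype.sum_equiv (Equiv.mulLeft g) _ _ (fun x => (mul_smul g x m).symm)

theorem my_aux : ∀ (r : ℕ) (G : Type u) [CommGroup G] [Fintype G]
    (M : Type v) [AddCommGroup M] [Module (ZMod 2) M] [Finite M]
    [DistribMulAction G M] [SMulCommClass G (ZMod 2) M],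
    Fintype.card G = 2 ^ (r + 1) →
    Module.finrank (ZMod 2) M ≤
      (2 ^ (r + 1) - 1) * Module.finrank (ZMod 2) (fixedPointsSubmodule G M) +
        Module.finrank (ZMod 2) (LinearMap.range (normLinearMap G M)) := by
  intro r
  induction r with
  | zero =>
    intro G _ _ M _ _ _ _ _ hG
    classical
    haveI : Module.Finite (ZMod 2) M := Module.Finite.of_finite
    obtain ⟨g, hg⟩ := Fintype.exists_ne_of_one_lt_card (by rw [hG]; norm_num) (1 : G)
    have hclass : ∀ x : G, x = 1 ∨ x = g := by
      intro x
      by_cases hx : x = 1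
      · exact Or.inl hx
      · exact Or.inr (my_eq_of_ne_one hG hx hg)
    have huniv : (Finset.univ : Finset G) = {1, g} := by
      refine (Finset.eq_of_subset_of_card_le (Finset.subset_univ _) ?_).symm
      rw [Finset.card_univ, hG, Finset.card_pair (Ne.symm hg)]
      norm_num
    have hnm : ∀ m : M, normLinearMap G M m = m + g • m := by
      intro m
      show (∑ x : G, x • m) = m + g • m
      rw [huniv, Finset.sum_pair (Ne.symm hg), one_smul]
    have hker : LinearMap.ker (normLinearMap G M) = fixedPointsSubmodule G M := by
      ext m
      rw [LinearMap.mem_ker, my_mem_fixed_iff, hnm]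
      constructor
      · intro h x
        rcases hclass x with rfl | rfl
        · exact one_smul _ m
        · rw [eq_neg_of_add_eq_zero_right h, my_neg_eq_self]
      · intro h
        rw [h g]
        calc m + m = (2 : ZMod 2) • m := by rw [two_smul]
          _ = 0 := by rw [show (2 : ZMod 2) = 0 by decide, zero_smul]
    have h2 := LinearMap.finrank_range_add_finrank_ker (normLinearMap G M)
    rw [hker] at h2
    rw [show (2 : ℕ) ^ (0 + 1) - 1 = 1 by norm_num, one_mul]
    omega
  | succ r ih =>
    intro G _ _ M _ _ _ _ _ hG
    haveI : Module.Finite (ZMod 2) M := Module.Finite.of_finite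
    haveI : Fact (Nat.Prime 2) := ⟨Nat.prime_two⟩
    obtain ⟨H, hH⟩ := Sylow.exists_subgroup_card_pow_prime (G := G) 2 (n := r + 1)
      (by rw [Nat.card_eq_fintype_card, hG]; exact pow_dvd_pow 2 (by omega))
    haveI : Fintype H := Fintype.ofFinite _
    haveI : Fintype (G ⧸ H) := Fintype.ofFinite _
    have hHcard : Fintype.card H = 2 ^ (r + 1) := by
      rw [← Nat.card_eq_fintype_card]; exact hH
    have hq : Fintype.card (G ⧸ H) = 2 := by
      have h0 := Subgroup.card_eq_card_quotient_mul_card_subgroup H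
      rw [Nat.card_eq_fintype_card, Nat.card_eq_fintype_card, Nat.card_eq_fintype_card,
        hG, hHcard] at h0
      have h1 : 0 < 2 ^ (r + 1) := by positivity
      have h2 : Fintype.card (G ⧸ H) * 2 ^ (r + 1) = 2 * 2 ^ (r + 1) := by
        rw [← h0, pow_succ, mul_comm]
      exact Nat.eq_of_mul_eq_mul_right h1 h2
    obtain ⟨g, hg⟩ : ∃ g : G, g ∉ H := by
      by_contra hcon
      push_neg at hcon
      have htop : H = ⊤ := by
        ext x; simp [hcon x]
      rw [htop] at hH
      rw [Subgroup.card_top, Nat.card_eq_fintype_card, hG] at hH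
      have := Nat.pow_right_injective (le_refl 2) hH
      omega
    have hgq : (QuotientGroup.mk g : G ⧸ H) ≠ 1 := by
      simpa [QuotientGroup.eq_one_iff] using hg
    have hcoset : ∀ x : G, x ∉ H → g⁻¹ * x ∈ H := by
      intro x hx
      have hxq : (QuotientGroup.mk x : G ⧸ H) ≠ 1 := by
        simpa [QuotientGroup.eq_one_iff] using hx
      have heq : (QuotientGroup.mk g : G ⧸ H) = QuotientGroup.mk x :=
        my_eq_of_ne_one hq hgq hxq
      exact (QuotientGroup.eq).mp heq
    have hgg : g * g ∈ H := by
      have h3 : (QuotientGroup.mk g : G ⧸ H) ^ Fintype.card (G ⧸ H) = 1 := pow_card_eq_one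
      rw [hq, pow_two] at h3
      have h4 : (QuotientGroup.mk (g * g) : G ⧸ H) = 1 := by
        rw [QuotientGroup.mk_mul]; exact h3
      exact (QuotientGroup.eq_one_iff _).mp h4
    -- bijection H ⊕ H ≃ G
    have hbij : Function.Bijective
        (Sum.elim (fun h : H => (h : G)) (fun h : H => g * (h : G))) := by
      constructor
      · rintro (a | a) (b | b) hab <;>
          simp only [Sum.elim_inl, Sum.elim_inr] at hab
        · exact congrArg Sum.inl (Subtype.ext hab)
        · exfalso
          apply hg
          have : g = (a : G) * (b : G)⁻¹ := by rw [hab]; group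
          rw [this]; exact H.mul_mem a.2 (H.inv_mem b.2)
        · exfalso
          apply hg
          have : g = (b : G) * (a : G)⁻¹ := by rw [← hab]; group
          rw [this]; exact H.mul_mem b.2 (H.inv_mem a.2)
        · exact congrArg Sum.inr (Subtype.ext (mul_left_cancel hab))
      · intro x
        by_cases hx : x ∈ H
        · exact ⟨Sum.inl ⟨x, hx⟩, rfl⟩
        · exact ⟨Sum.inr ⟨g⁻¹ * x, hcoset x hx⟩, by simp⟩
    have hsub : ∀ (h : H) (m : M), h • m = (h : G) • m := fun _ _ => rfl
    have hnorm : ∀ m : M, normLinearMap G M m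
        = normLinearMap H M m + g • normLinearMap H M m := by
      intro m
      show (∑ x : G, x • m) = (∑ h : H, h • m) + g • (∑ h : H, h • m)
      have h5 := Fintype.sum_bijective _ hbij
        (fun y : H ⊕ H =>
          (Sum.elim (fun h : H => (h : G)) (fun h : H => g * (h : G)) y) • m)
        (fun x : G => x • m) (fun y => rfl)
      rw [← h5, Fintype.sum_sum_type]
      simp only [Sum.elim_inl, Sum.elim_inr]
      rw [Finset.smul_sum]
      congr 1
      exact Finset.sum_congr rfl fun h _ => mul_smul g (h : G) m
    set Tg : M →ₗ[ZMod 2] M :=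
      LinearMap.id + DistribMulAction.toLinearMap (ZMod 2) M g with hTg
    have hTgapp : ∀ m : M, Tg m = m + g • m := fun m => rfl
    have hnorm2 : normLinearMap G M = Tg ∘ₗ normLinearMap H M := by
      ext m
      rw [LinearMap.comp_apply, hTgapp, hnorm]
    set S := LinearMap.range (normLinearMap H M) with hS
    set FH := fixedPointsSubmodule H M with hFH
    set F := fixedPointsSubmodule G M with hFdef
    -- members of S are H-fixed
    have hSfix : ∀ m ∈ S, ∀ h : H, h • m = m := by
      rintro _ ⟨m, rfl⟩ h
      show h • (∑ x : H, x • m) = ∑ x : H, x • m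
      exact my_norm_fixed h m
    -- H-fixed + g-fixed implies G-fixed
    have hGfix : ∀ m : M, (∀ h : H, h • m = m) → g • m = m → ∀ x : G, x • m = m := by
      intro m hHm hgm x
      by_cases hx : x ∈ H
      · have := hHm ⟨x, hx⟩
        rwa [hsub] at this
      · have h1 : x = g * (g⁻¹ * x) := by group
        rw [h1, mul_smul]
        have h2 := hHm ⟨g⁻¹ * x, hcoset x hx⟩
        rw [hsub] at h2
        rw [h2]
        exact hgm
    -- char 2: a + g•a = 0 implies g•a = a
    have hchar2 : ∀ m : M, m + g • m = 0 → g • m = m := by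
      intro m hm
      rw [eq_neg_of_add_eq_zero_right hm, my_neg_eq_self]
    -- φ : S → M
    set φ : S →ₗ[ZMod 2] M := Tg ∘ₗ S.subtype with hφdef
    have hφapp : ∀ s : S, φ s = (s : M) + g • (s : M) := fun s => rfl
    have hrangeφ : LinearMap.range φ = LinearMap.range (normLinearMap G M) := by
      rw [hnorm2, hφdef, LinearMap.range_comp, LinearMap.range_comp, Submodule.range_subtype]
    have hkerφ : Module.finrank (ZMod 2) (LinearMap.ker φ) ≤ Module.finrank (ZMod 2) F := by
      have hj : ∀ x : LinearMap.ker φ, ((x : S) : M) ∈ F := by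
        intro x
        rw [hFdef, my_mem_fixed_iff]
        refine hGfix _ (fun h => hSfix _ (x : S).2 h) ?_
        apply hchar2
        have := x.2
        rw [LinearMap.mem_ker, hφapp] at this
        exact this
      let j : LinearMap.ker φ →ₗ[ZMod 2] F :=
        { toFun := fun x => ⟨((x : S) : M), hj x⟩
          map_add' := fun a b => rfl
          map_smul' := fun c a => rfl }
      have hjinj : Function.Injective j := by
        intro a b hab
        have h9 : (j a : M) = (j b : M) := congrArg Subtype.val hab
        exact Subtype.ext (Subtype.ext h9)
      exact LinearMap.finrank_le_finrank_of_injective hjinj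
    -- ψ : FH → M
    set ψ : FH →ₗ[ZMod 2] M := Tg ∘ₗ FH.subtype with hψdef
    have hψapp : ∀ s : FH, ψ s = (s : M) + g • (s : M) := fun s => rfl
    have hFHfix : ∀ m : M, m ∈ FH → ∀ h : H, h • m = m := by
      intro m hm
      rw [hFH, my_mem_fixed_iff] at hm
      exact hm
    have hrangeψ : Module.finrank (ZMod 2) (LinearMap.range ψ)
        ≤ Module.finrank (ZMod 2) F := by
      apply Submodule.finrank_mono
      rintro _ ⟨m, rfl⟩
      rw [hψapp, hFdef, my_mem_fixed_iff]
      apply hGfix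
      · -- H-fixedness of m + g•m
        intro h
        rw [smul_add, hFHfix _ m.2 h]
        congr 1
        rw [hsub, ← mul_smul, mul_comm, mul_smul]
        rw [← hsub h, hFHfix _ m.2 h]
      · -- g-fixedness
        rw [smul_add, ← mul_smul]
        have := hFHfix _ m.2 ⟨g * g, hgg⟩
        rw [hsub] at this
        rw [this, add_comm]
    have hkerψ : Module.finrank (ZMod 2) (LinearMap.ker ψ) ≤ Module.finrank (ZMod 2) F := by
      have hj : ∀ x : LinearMap.ker ψ, ((x : FH) : M) ∈ F := by
        intro x
        rw [hFdef, my_mem_fixed_iff]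
        refine hGfix _ (fun h => hFHfix _ (x : FH).2 h) ?_
        apply hchar2
        have := x.2
        rw [LinearMap.mem_ker, hψapp] at this
        exact this
      let j : LinearMap.ker ψ →ₗ[ZMod 2] F :=
        { toFun := fun x => ⟨((x : FH) : M), hj x⟩
          map_add' := fun a b => rfl
          map_smul' := fun c a => rfl }
      have hjinj : Function.Injective j := by
        intro a b hab
        have h9 : (j a : M) = (j b : M) := congrArg Subtype.val hab
        exact Subtype.ext (Subtype.ext h9)
      exact LinearMap.finrank_le_finrank_of_injective hjinj
    -- rank-nullity for φ and ψ
    have hrnφ := LinearMap.finrank_range_add_finrank_ker φ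
    have hrnψ := LinearMap.finrank_range_add_finrank_ker ψ
    rw [hrangeφ] at hrnφ
    -- induction hypothesis for H
    have hIH := ih H M hHcard
    -- arithmetic
    obtain ⟨B, hB⟩ : ∃ B, 2 ^ (r + 1) = B + 1 := by
      refine ⟨2 ^ (r + 1) - 1, ?_⟩
      have h0 : 0 < 2 ^ (r + 1) := by positivity
      omega
    have e3 : Module.finrank (ZMod 2) FH ≤ 2 * Module.finrank (ZMod 2) F := by omega
    have e2 : Module.finrank (ZMod 2) S
        ≤ Module.finrank (ZMod 2) F
          + Module.finrank (ZMod 2) (LinearMap.range (normLinearMap G M)) := by omega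
    have hpow : 2 * B + 1 = 2 ^ (r + 1 + 1) - 1 := by
      rw [pow_succ, hB]; omega
    calc Module.finrank (ZMod 2) M
        ≤ (2 ^ (r + 1) - 1) * Module.finrank (ZMod 2) FH + Module.finrank (ZMod 2) S := hIH
      _ = B * Module.finrank (ZMod 2) FH + Module.finrank (ZMod 2) S := by
          rw [hB]; norm_num
      _ ≤ B * (2 * Module.finrank (ZMod 2) F)
          + (Module.finrank (ZMod 2) F
            + Module.finrank (ZMod 2) (LinearMap.range (normLinearMap G M))) :=
          Nat.add_le_add (Nat.mul_le_mul_left _ e3) e2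
      _ = (2 * B + 1) * Module.finrank (ZMod 2) F
          + Module.finrank (ZMod 2) (LinearMap.range (normLinearMap G M)) := by ring
      _ = (2 ^ (r + 1 + 1) - 1) * Module.finrank (ZMod 2) F
          + Module.finrank (ZMod 2) (LinearMap.range (normLinearMap G M)) := by rw [hpow]

/-- If `G` is an abelian group of order `2^r` with `r > 0` and `M` is a finite `F₂[G]`-module,
then `dim M ≤ (2^r - 1) dim M^G + dim (N_G ⬝ M)`. -/
theorem finrank_le_of_f2_group_module
    (G : Type*) [CommGroup G] [Fintype G]
    (M : Type*) [AddCommGroup M] [Module (ZMod 2) M] [Finite M]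
    [DistribMulAction G M] [SMulCommClass G (ZMod 2) M]
    (r : ℕ) (hr : 0 < r) (hG : Fintype.card G = 2 ^ r) :
    Module.finrank (ZMod 2) M ≤
      (2 ^ r - 1) * Module.finrank (ZMod 2) (fixedPointsSubmodule G M) +
        Module.finrank (ZMod 2) (LinearMap.range (normLinearMap G M)) := by
  obtain ⟨s, rfl⟩ : ∃ s, r = s + 1 := ⟨r - 1, by omega⟩
  exact my_aux s G M hG

end
end

section
/- Let (\mathcal{U}, \mathbf{k}, \mathbf{c}) be an Ekedahl-admissible triple. Then the limit lim_{X\to\infty} #V^{\mathcal{U}}_{\mathbf{k},\mathbf{c}}(X) / Vol(V_{\mathbf{k},\mathbf{c}}(X)) exists and equals \prod_{p prime} (1 - \mu_p(\mathcal{U}_p)). -/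
open MeasureTheory Filter Topology

noncomputable section

instance (p : Nat.Primes) : Fact (p : ℕ).Prime := ⟨p.2⟩
instance (p : ℕ) [Fact p.Prime] : MeasurableSpace ℤ_[p] := borel _
instance (p : ℕ) [Fact p.Prime] : BorelSpace ℤ_[p] := ⟨rfl⟩

/-- The set of lattice points of the box `V_{k,c}(X) = ∏ᵢ [-(cᵢX)^{1/kᵢ}, (cᵢX)^{1/kᵢ}]`. -/
def latticeBox (n : ℕ) (k : Fin n → ℕ) (c : Fin n → ℝ) (X : ℝ) : Set (Fin n → ℤ) :=
  {x | ∀ i, |(x i : ℝ)| ≤ (c i * X) ^ ((k i : ℝ)⁻¹)}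

/-- The volume of the box `V_{k,c}(X)`. -/
def boxVol (n : ℕ) (k : Fin n → ℕ) (c : Fin n → ℝ) (X : ℝ) : ℝ :=
  ∏ i : Fin n, (2 * (c i * X) ^ ((k i : ℝ)⁻¹))

/-- The diagonal embedding `ℤ^n → ℤ_p^n`. -/
def padicEmbed (n : ℕ) (p : Nat.Primes) (x : Fin n → ℤ) : Fin n → ℤ_[p] :=
  fun i => ((x i : ℤ) : ℤ_[p])

/-- The sieved set `V^𝒰_{k,c}(X)` of lattice points in the box avoiding every `𝒰_p`. -/
def sievedBox (n : ℕ) (k : Fin n → ℕ) (c : Fin n → ℝ)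
    (U : (p : Nat.Primes) → Set (Fin n → ℤ_[p])) (X : ℝ) : Set (Fin n → ℤ) :=
  {x | x ∈ latticeBox n k c X ∧ ∀ p : Nat.Primes, padicEmbed n p x ∉ U p}

/-- Ekedahl admissibility of the triple `(𝒰, k, c)`. -/
def EkedahlAdmissible (n : ℕ) (k : Fin n → ℕ) (c : Fin n → ℝ)
    (U : (p : Nat.Primes) → Set (Fin n → ℤ_[p])) : Prop :=
  Tendsto (fun Y : ℝ =>
      limsup (fun X : ℝ =>
        (({x ∈ latticeBox n k c X |
            ∃ p : Nat.Primes, Y < (p : ℕ) ∧ padicEmbed n p x ∈ U p}).ncard : ℝ)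
          / boxVol n k c X) atTop)
    atTop (𝓝 0)

/-!
Fix finitely many primes `S`. Since `∂𝒰_p` is null, the unions of the level-`e` cells
`x + p^e ℤ_p^n` contained in `𝒰_p`, resp. meeting `𝒰_p`, have Haar measure tending to `μ_p(𝒰_p)`;
so `x ∉ 𝒰_p` is squeezed between congruence conditions modulo `p^e`. A residue class modulo `M`
has density `M^{-n}` in the growing box, and by the Chinese remainder theorem congruence
conditions to coprime moduli are independent, so the points avoiding `𝒰_p` for `p ∈ S` have density
`∏_{p ∈ S} (1 - μ_p(𝒰_p))`. This bounds the sieved density from above for every `S`; from below it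
loses at most the density of the points caught by some `𝒰_p` with `p > Y`, where `S = {p ≤ Y}`,
which admissibility makes small.
-/

theorem ncard_univ_pi {ι : Type*} [Fintype ι] {α : ι → Type*} (s : ∀ i, Set (α i)) :
    (Set.univ.pi s).ncard = ∏ i, (s i).ncard := by
  simp only [← Nat.card_coe_set_eq]
  rw [Nat.card_congr (Equiv.Set.univPi s), Nat.card_pi]

theorem abs_ncard_intCast_mem_Icc_sub_le {α β : ℝ} (h : α ≤ β) :
    |({q : ℤ | (q : ℝ) ∈ Set.Icc α β}.ncard : ℝ) - (β - α)| ≤ 1 := by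
  have hset : {q : ℤ | (q : ℝ) ∈ Set.Icc α β} = ↑(Finset.Icc ⌈α⌉ ⌊β⌋) := by
    ext q
    simp [Int.ceil_le, Int.le_floor]
  have hle : ⌈α⌉ < ⌊β⌋ + 2 := by
    exact_mod_cast (show (⌈α⌉ : ℝ) < ⌊β⌋ + 2 by
      linarith [Int.ceil_lt_add_one α, Int.sub_one_lt_floor β])
  rw [hset, Set.ncard_coe_finset, Int.card_Icc, ← Int.cast_natCast,
    Int.toNat_of_nonneg (by omega), abs_le]
  push_cast
  constructor <;>
    linarith [Int.floor_le β, Int.sub_one_lt_floor β, Int.le_ceil α, Int.ceil_lt_add_one α]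

theorem abs_ncard_residueClass_sub_le {M : ℕ} (hM : 0 < M) (t : ZMod M) {B : ℝ} (hB : 0 ≤ B) :
    |({a : ℤ | |(a : ℝ)| ≤ B ∧ (a : ZMod M) = t}.ncard : ℝ) - 2 * B / M| ≤ 1 := by
  have : NeZero M := ⟨hM.ne'⟩
  have hMR : (0 : ℝ) < M := by exact_mod_cast hM
  set v : ℤ := (t.val : ℤ)
  have hv : (v : ZMod M) = t := by simp [v]
  have hclass : ∀ a : ℤ, (a : ZMod M) = t ↔ ∃ q, v + M * q = a := by
    intro a
    rw [← hv, eq_comm, ZMod.intCast_eq_intCast_iff_dvd_sub]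
    exact ⟨fun ⟨q, hq⟩ => ⟨q, by omega⟩, fun ⟨q, hq⟩ => ⟨q, by omega⟩⟩
  have hset : {a : ℤ | |(a : ℝ)| ≤ B ∧ (a : ZMod M) = t} =
      (fun q : ℤ => v + M * q) '' {q : ℤ | (q : ℝ) ∈ Set.Icc ((-B - v) / M) ((B - v) / M)} := by
    ext a
    simp only [Set.mem_ofPred_eq, hclass, Set.mem_image, Set.mem_Icc, abs_le, div_le_iff₀ hMR,
      le_div_iff₀ hMR]
    constructor
    · rintro ⟨⟨h₁, h₂⟩, q, rfl⟩
      push_cast at h₁ h₂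
      exact ⟨q, ⟨by linarith, by linarith⟩, rfl⟩
    · rintro ⟨q, ⟨h₁, h₂⟩, rfl⟩
      exact ⟨by push_cast; constructor <;> linarith, q, rfl⟩
  have hinj : Function.Injective fun q : ℤ => v + M * q := fun q q' h => by
    simpa [hM.ne'] using h
  rw [hset, Set.ncard_image_of_injective _ hinj]
  convert abs_ncard_intCast_mem_Icc_sub_le (α := (-B - v) / M) (β := (B - v) / M)
    (by gcongr; linarith) using 2
  ring

theorem tendsto_ncard_residueClass_div {M : ℕ} (hM : 0 < M) (t : ZMod M) :
    Tendsto (fun B : ℝ => ({a : ℤ | |(a : ℝ)| ≤ B ∧ (a : ZMod M) = t}.ncard : ℝ) / (2 * B))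
      atTop (𝓝 (1 / M)) := by
  rw [tendsto_iff_norm_sub_tendsto_zero]
  refine squeeze_zero' (Eventually.of_forall fun _ => norm_nonneg _) ?_
    (tendsto_inv_atTop_zero.comp (tendsto_id.const_mul_atTop two_pos))
  filter_upwards [eventually_gt_atTop 0] with B hB
  have hMR : (0 : ℝ) < M := by exact_mod_cast hM
  rw [Real.norm_eq_abs, Function.comp_apply, id,
    show ∀ x : ℝ, x / (2 * B) - 1 / M = (x - 2 * B / M) * (2 * B)⁻¹ from fun x => by
      field_simp, abs_mul, abs_of_pos (by positivity : (0 : ℝ) < (2 * B)⁻¹)]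
  exact mul_le_of_le_one_left (by positivity) (abs_ncard_residueClass_sub_le hM t hB.le)

section BoxDensity

variable {n : ℕ} {k : Fin n → ℕ} {c : Fin n → ℝ}

def intReduce (n M : ℕ) : (Fin n → ℤ) →+* (Fin n → ZMod M) :=
  (Int.castRingHom (ZMod M)).compLeft (Fin n)

def boxDensity (k : Fin n → ℕ) (c : Fin n → ℝ) (A : Set (Fin n → ℤ)) (X : ℝ) : ℝ :=
  ((latticeBox n k c X ∩ A).ncard : ℝ) / boxVol n k c X

def HasBoxDensity (k : Fin n → ℕ) (c : Fin n → ℝ) (A : Set (Fin n → ℤ)) (d : ℝ) : Prop :=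
  Tendsto (boxDensity k c A) atTop (𝓝 d)

theorem latticeBox_finite (k : Fin n → ℕ) (c : Fin n → ℝ) (X : ℝ) :
    (latticeBox n k c X).Finite := by
  refine (Set.Finite.pi fun i => (Set.finite_Icc ⌈-(c i * X) ^ (k i : ℝ)⁻¹⌉
    ⌊(c i * X) ^ (k i : ℝ)⁻¹⌋)).subset fun x hx i _ => ?_
  have := abs_le.1 (hx i)
  exact ⟨Int.ceil_le.2 this.1, Int.le_floor.2 this.2⟩

theorem boxVol_pos (hc : ∀ i, 0 < c i) {X : ℝ} (hX : 0 < X) : 0 < boxVol n k c X :=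
  Finset.prod_pos fun i _ => mul_pos two_pos (Real.rpow_pos_of_pos (mul_pos (hc i) hX) _)

theorem boxDensity_mono (hc : ∀ i, 0 < c i) {A B : Set (Fin n → ℤ)} (h : A ⊆ B) {X : ℝ}
    (hX : 0 < X) : boxDensity k c A X ≤ boxDensity k c B X := by
  unfold boxDensity
  gcongr
  · exact (boxVol_pos hc hX).le
  · exact (latticeBox_finite k c X).inter_of_left B

theorem boxDensity_le_add (hc : ∀ i, 0 < c i) {A B C : Set (Fin n → ℤ)} (h : A ⊆ B ∪ C)
    {X : ℝ} (hX : 0 < X) : boxDensity k c A X ≤ boxDensity k c B X + boxDensity k c C X := by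
  unfold boxDensity
  rw [← add_div]
  gcongr
  · exact (boxVol_pos hc hX).le
  · have hsub : latticeBox n k c X ∩ A ⊆ (latticeBox n k c X ∩ B) ∪ (latticeBox n k c X ∩ C) := by
      rw [← Set.inter_union_distrib_left]
      exact Set.inter_subset_inter_right _ h
    have hfin := latticeBox_finite k c X
    exact_mod_cast (Set.ncard_le_ncard hsub ((hfin.inter_of_left B).union
      (hfin.inter_of_left C))).trans (Set.ncard_union_le _ _)

theorem HasBoxDensity.union {A B : Set (Fin n → ℤ)} {a b : ℝ} (hA : HasBoxDensity k c A a)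
    (hB : HasBoxDensity k c B b) (hAB : Disjoint A B) : HasBoxDensity k c (A ∪ B) (a + b) := by
  refine (hA.add hB).congr fun X => ?_
  have hfin := latticeBox_finite k c X
  rw [boxDensity, boxDensity, boxDensity, ← add_div, Set.inter_union_distrib_left,
    Set.ncard_union_eq (hAB.mono Set.inter_subset_right Set.inter_subset_right)
      (hfin.inter_of_left A) (hfin.inter_of_left B), Nat.cast_add]

theorem HasBoxDensity.of_sandwich (hc : ∀ i, 0 < c i) {ι : Type*} {l : Filter ι} [l.NeBot]
    {A : Set (Fin n → ℤ)} {B B' : ι → Set (Fin n → ℤ)} {b b' : ι → ℝ} {d : ℝ}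
    (hB : ∀ m, HasBoxDensity k c (B m) (b m)) (hB' : ∀ m, HasBoxDensity k c (B' m) (b' m))
    (hb : Tendsto b l (𝓝 d)) (hb' : Tendsto b' l (𝓝 d)) (hBA : ∀ m, B m ⊆ A)
    (hAB' : ∀ m, A ⊆ B' m) : HasBoxDensity k c A d := by
  refine tendsto_order.2 ⟨fun a ha => ?_, fun a ha => ?_⟩
  · obtain ⟨m, hm⟩ := ((tendsto_order.1 hb).1 a ha).exists
    filter_upwards [(tendsto_order.1 (hB m)).1 a hm, eventually_gt_atTop 0] with X hX hX0
    exact hX.trans_le (boxDensity_mono hc (hBA m) hX0)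
  · obtain ⟨m, hm⟩ := ((tendsto_order.1 hb').2 a ha).exists
    filter_upwards [(tendsto_order.1 (hB' m)).2 a hm, eventually_gt_atTop 0] with X hX hX0
    exact (boxDensity_mono hc (hAB' m) hX0).trans_lt hX

theorem hasBoxDensity_residueClass (hk : ∀ i, 1 ≤ k i) (hc : ∀ i, 0 < c i) {M : ℕ} (hM : 0 < M)
    (r : Fin n → ZMod M) : HasBoxDensity k c (intReduce n M ⁻¹' {r}) (1 / M ^ n) := by
  set B : Fin n → ℝ → ℝ := fun i X => (c i * X) ^ (k i : ℝ)⁻¹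
  have hB : ∀ i, Tendsto (B i) atTop atTop := fun i =>
    (tendsto_rpow_atTop (inv_pos.2 (by exact_mod_cast hk i))).comp
      (tendsto_id.const_mul_atTop (hc i))
  have hfactor : ∀ i, Tendsto (fun X => ({a : ℤ | |(a : ℝ)| ≤ B i X ∧ (a : ZMod M) = r i}.ncard
      : ℝ) / (2 * B i X)) atTop (𝓝 (1 / M)) := fun i =>
    (tendsto_ncard_residueClass_div hM (r i)).comp (hB i)
  have hbox : ∀ X, latticeBox n k c X ∩ intReduce n M ⁻¹' {r} =
      Set.univ.pi fun i => {a : ℤ | |(a : ℝ)| ≤ B i X ∧ (a : ZMod M) = r i} := by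
    intro X
    ext x
    simp [latticeBox, intReduce, funext_iff, B, forall_and]
  unfold HasBoxDensity
  convert tendsto_finsetProd Finset.univ fun i _ => hfactor i using 2
  · rw [boxDensity, hbox, ncard_univ_pi, Nat.cast_prod, boxVol, ← Finset.prod_div_distrib]
  · simp

theorem hasBoxDensity_preimage_intReduce (hk : ∀ i, 1 ≤ k i) (hc : ∀ i, 0 < c i) {M : ℕ}
    (hM : 0 < M) (T : Set (Fin n → ZMod M)) :
    HasBoxDensity k c (intReduce n M ⁻¹' T) (Nat.card T / M ^ n) := by
  have : NeZero M := ⟨hM.ne'⟩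
  induction T, T.toFinite using Set.Finite.induction_on with
  | empty =>
    refine tendsto_const_nhds.congr fun X => ?_
    simp [boxDensity]
  | @insert r T hr hT ih =>
    rw [Set.insert_eq, Set.preimage_union, Nat.card_coe_set_eq, Set.ncard_union_eq
      (Set.disjoint_singleton_left.2 hr), Set.ncard_singleton, ← Nat.card_coe_set_eq,
      Nat.cast_add, add_div, Nat.cast_one]
    exact (hasBoxDensity_residueClass hk hc hM r).union ih
      ((Set.disjoint_singleton_left.2 hr).preimage (intReduce n M))

theorem hasBoxDensity_univ (hk : ∀ i, 1 ≤ k i) (hc : ∀ i, 0 < c i) :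
    HasBoxDensity k c Set.univ 1 := by
  convert hasBoxDensity_residueClass hk hc one_pos (0 : Fin n → ZMod 1) using 1
  · exact (Set.eq_univ_of_forall fun _ => Subsingleton.elim _ _).symm
  · simp

theorem hasBoxDensity_forall_mem_of_coprime (hk : ∀ i, 1 ≤ k i) (hc : ∀ i, 0 < c i)
    {ι : Type*} [Fintype ι] (a : ι → ℕ) (ha : ∀ i, 0 < a i)
    (hcop : Pairwise fun i j => (a i).Coprime (a j))
    (T : ∀ i, Set (Fin n → ZMod (a i))) :
    HasBoxDensity k c {x | ∀ i, intReduce n (a i) x ∈ T i}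
      (∏ i, (Nat.card (T i) : ℝ) / (a i : ℝ) ^ n) := by
  set Ψ : (Fin n → ZMod (∏ i, a i)) ≃ ∀ i, Fin n → ZMod (a i) :=
    (Equiv.piCongrRight fun _ => (ZMod.prodEquivPi a hcop).toEquiv).trans (Equiv.piComm _)
  have hΨ : ∀ x, Ψ (intReduce n _ x) = fun i => intReduce n (a i) x := fun x => by
    ext i j
    simp [Ψ, intReduce, Equiv.piComm, Function.swap, RingHom.compLeft]
  have hset : {x | ∀ i, intReduce n (a i) x ∈ T i} =
      intReduce n (∏ i, a i) ⁻¹' (Ψ ⁻¹' Set.univ.pi T) := by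
    ext x
    simp [hΨ]
  have hcard : Nat.card (Ψ ⁻¹' Set.univ.pi T) = ∏ i, Nat.card (T i) := by
    rw [Nat.card_coe_set_eq, Set.ncard_preimage_of_injective_subset_range Ψ.injective
      (by simp [Ψ.surjective.range_eq]), ncard_univ_pi]
    simp [Nat.card_coe_set_eq]
  rw [hset]
  convert hasBoxDensity_preimage_intReduce hk hc (Finset.prod_pos fun i _ => ha i) _ using 1
  rw [hcard, Nat.cast_prod, Nat.cast_prod, ← Finset.prod_pow, Finset.prod_div_distrib]

theorem eventually_boxDensity_lt_of_limsup_lt (hk : ∀ i, 1 ≤ k i) (hc : ∀ i, 0 < c i)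
    {A : Set (Fin n → ℤ)} {ε : ℝ} (h : limsup (boxDensity k c A) atTop < ε) :
    ∀ᶠ X in atTop, boxDensity k c A X < ε :=
  eventually_lt_of_limsup_lt h <| (hasBoxDensity_univ hk hc).isBoundedUnder_le.mono_le <|
    (eventually_gt_atTop 0).mono fun _ hX => boxDensity_mono hc (Set.subset_univ A) hX

end BoxDensity

theorem measure_preimage_eq_card_div_card {G H F : Type*} [AddGroup G] [MeasurableSpace G]
    [MeasurableAdd G] [AddGroup H] [Finite H] [FunLike F G H] [AddMonoidHomClass F G H]
    (μ : Measure G) [μ.IsAddLeftInvariant] [IsProbabilityMeasure μ] (f : F)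
    (hf : Function.Surjective f)
    (hmeas : ∀ r, MeasurableSet (f ⁻¹' {r})) (T : Set H) :
    μ (f ⁻¹' T) = Nat.card T / Nat.card H := by
  classical
  have := Fintype.ofFinite H
  have hfiber : ∀ r, μ (f ⁻¹' {r}) = μ (f ⁻¹' {0}) := by
    intro r
    obtain ⟨a, rfl⟩ := hf r
    rw [← measure_preimage_add μ (-a) (f ⁻¹' {0})]
    congr 1
    ext z
    simp only [Set.mem_preimage, Set.mem_singleton_iff, map_add, map_neg, neg_add_eq_zero]
    exact eq_comm
  have hcount : ∀ s : Set H, μ (f ⁻¹' s) = Nat.card s * μ (f ⁻¹' {0}) := by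
    intro s
    conv_lhs => rw [← s.coe_toFinset]
    rw [← sum_measure_preimage_singleton _ fun r _ => hmeas r,
      Finset.sum_congr rfl fun r _ => hfiber r, Finset.sum_const, nsmul_eq_mul,
      Nat.card_eq_card_toFinset]
  have hunit : (Nat.card H : ENNReal) * μ (f ⁻¹' {0}) = 1 := by
    rw [← Nat.card_univ, ← hcount, Set.preimage_univ, measure_univ]
  rw [hcount, ENNReal.eq_inv_of_mul_eq_one_left (a := μ (f ⁻¹' {0})) (by rwa [mul_comm]),
    div_eq_mul_inv]

section Padic

variable {n p : ℕ} [Fact p.Prime]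

def padicReduce (n p : ℕ) [Fact p.Prime] (e : ℕ) : (Fin n → ℤ_[p]) →+* (Fin n → ZMod (p ^ e)) :=
  (PadicInt.toZModPow e).compLeft (Fin n)

def IsCylinder (C : Set (Fin n → ℤ_[p])) : Prop :=
  ∃ (e : ℕ) (T : Set (Fin n → ZMod (p ^ e))), C = padicReduce n p e ⁻¹' T

def innerCylinder (e : ℕ) (V : Set (Fin n → ℤ_[p])) : Set (Fin n → ℤ_[p]) :=
  padicReduce n p e ⁻¹' {r | padicReduce n p e ⁻¹' {r} ⊆ V}

def outerCylinder (e : ℕ) (V : Set (Fin n → ℤ_[p])) : Set (Fin n → ℤ_[p]) :=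
  padicReduce n p e ⁻¹' (padicReduce n p e '' V)

theorem padicReduce_eq_iff {e : ℕ} {z w : Fin n → ℤ_[p]} :
    padicReduce n p e w = padicReduce n p e z ↔ dist w z ≤ (p : ℝ)⁻¹ ^ e := by
  rw [dist_pi_le_iff (by positivity), funext_iff]
  refine forall_congr' fun i => ?_
  rw [dist_eq_norm, inv_pow, ← zpow_natCast, ← zpow_neg, PadicInt.norm_le_pow_iff_mem_span_pow,
    ← PadicInt.ker_toZModPow, RingHom.mem_ker, map_sub, sub_eq_zero]
  rfl

theorem nhds_basis_padicReduce_fiber (z : Fin n → ℤ_[p]) :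
    (𝓝 z).HasBasis (fun _ => True) fun e => padicReduce n p e ⁻¹' {padicReduce n p e z} := by
  have hp : (1 : ℝ) < p := by exact_mod_cast (Fact.out : p.Prime).one_lt
  refine (Metric.nhds_basis_closedBall_pow (inv_pos.2 (zero_lt_one.trans hp))
    (inv_lt_one_of_one_lt₀ hp)).congr (fun _ => Iff.rfl) fun e _ => ?_
  ext w
  exact padicReduce_eq_iff.symm

theorem isOpen_preimage_padicReduce (e : ℕ) (T : Set (Fin n → ZMod (p ^ e))) :
    IsOpen (padicReduce n p e ⁻¹' T) :=
  isOpen_iff_mem_nhds.2 fun z hz => (nhds_basis_padicReduce_fiber z).mem_of_superset trivial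
    fun w hw => by rwa [Set.mem_preimage, Set.mem_singleton_iff.1 hw]

theorem IsCylinder.measurableSet {C : Set (Fin n → ℤ_[p])} (hC : IsCylinder C) :
    MeasurableSet C := by
  obtain ⟨e, T, rfl⟩ := hC
  exact (isOpen_preimage_padicReduce e T).measurableSet

theorem isCylinder_innerCylinder (e : ℕ) (V : Set (Fin n → ℤ_[p])) :
    IsCylinder (innerCylinder e V) :=
  ⟨e, _, rfl⟩

theorem isCylinder_outerCylinder (e : ℕ) (V : Set (Fin n → ℤ_[p])) :
    IsCylinder (outerCylinder e V) :=
  ⟨e, _, rfl⟩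

theorem mem_innerCylinder {e : ℕ} {V : Set (Fin n → ℤ_[p])} {z : Fin n → ℤ_[p]} :
    z ∈ innerCylinder e V ↔ padicReduce n p e ⁻¹' {padicReduce n p e z} ⊆ V :=
  Iff.rfl

theorem mem_outerCylinder {e : ℕ} {V : Set (Fin n → ℤ_[p])} {z : Fin n → ℤ_[p]} :
    z ∈ outerCylinder e V ↔ ∃ w ∈ V, w ∈ padicReduce n p e ⁻¹' {padicReduce n p e z} :=
  Iff.rfl

theorem innerCylinder_subset (e : ℕ) (V : Set (Fin n → ℤ_[p])) : innerCylinder e V ⊆ V :=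
  fun _ hz => mem_innerCylinder.1 hz rfl

theorem subset_outerCylinder (e : ℕ) (V : Set (Fin n → ℤ_[p])) : V ⊆ outerCylinder e V :=
  fun z hz => mem_outerCylinder.2 ⟨z, hz, rfl⟩

theorem padicReduce_fiber_antitone (z : Fin n → ℤ_[p]) :
    Antitone fun e => padicReduce n p e ⁻¹' {padicReduce n p e z} := by
  intro e e' he w hw
  have hp : (1 : ℝ) ≤ p := by exact_mod_cast (Fact.out : p.Prime).one_lt.le
  exact padicReduce_eq_iff.2 <| (padicReduce_eq_iff.1 hw).trans <|
    pow_le_pow_of_le_one (by positivity) (inv_le_one_of_one_le₀ hp) he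

theorem monotone_innerCylinder (V : Set (Fin n → ℤ_[p])) :
    Monotone fun e => innerCylinder e V :=
  fun _ _ he _ hz => (padicReduce_fiber_antitone _ he).trans hz

theorem antitone_outerCylinder (V : Set (Fin n → ℤ_[p])) :
    Antitone fun e => outerCylinder e V := fun _ _ he _ hz => by
  obtain ⟨w, hwV, hw⟩ := mem_outerCylinder.1 hz
  exact mem_outerCylinder.2 ⟨w, hwV, padicReduce_fiber_antitone _ he hw⟩

theorem iUnion_innerCylinder (V : Set (Fin n → ℤ_[p])) :
    ⋃ e, innerCylinder e V = interior V := by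
  ext z
  simp only [Set.mem_iUnion, mem_interior_iff_mem_nhds, (nhds_basis_padicReduce_fiber z).mem_iff,
    true_and, mem_innerCylinder]

theorem iInter_outerCylinder (V : Set (Fin n → ℤ_[p])) :
    ⋂ e, outerCylinder e V = closure V := by
  ext z
  simp only [Set.mem_iInter, mem_closure_iff_nhds_basis (nhds_basis_padicReduce_fiber z),
    forall_const, mem_outerCylinder]

theorem tendsto_measure_innerCylinder (μ : Measure (Fin n → ℤ_[p])) {V : Set (Fin n → ℤ_[p])}
    (hV : μ (frontier V) = 0) :
    Tendsto (fun e => μ (innerCylinder e V)) atTop (𝓝 (μ V)) := by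
  have h := tendsto_measure_iUnion_atTop (μ := μ) (monotone_innerCylinder V)
  rwa [iUnion_innerCylinder, measure_interior_of_null_frontier hV] at h

theorem tendsto_measure_outerCylinder (μ : Measure (Fin n → ℤ_[p])) [IsFiniteMeasure μ]
    {V : Set (Fin n → ℤ_[p])} (hV : μ (frontier V) = 0) :
    Tendsto (fun e => μ (outerCylinder e V)) atTop (𝓝 (μ V)) := by
  have h := tendsto_measure_iInter_atTop (μ := μ)
    (fun e => (isCylinder_outerCylinder e V).measurableSet.nullMeasurableSet)
    (antitone_outerCylinder V) ⟨0, measure_ne_top μ _⟩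
  rwa [iInter_outerCylinder, measure_closure_of_null_frontier hV] at h

theorem measureReal_preimage_padicReduce (μ : Measure (Fin n → ℤ_[p])) [μ.IsAddHaarMeasure]
    [IsProbabilityMeasure μ] (e : ℕ) (T : Set (Fin n → ZMod (p ^ e))) :
    μ.real (padicReduce n p e ⁻¹' T) = Nat.card T / ((p ^ e : ℕ) : ℝ) ^ n := by
  rw [measureReal_def, measure_preimage_eq_card_div_card μ (padicReduce n p e)
    (ZMod.ringHom_surjective (PadicInt.toZModPow e)).comp_left
    (fun r => (isOpen_preimage_padicReduce e {r}).measurableSet) T]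
  simp [ENNReal.toReal_div]

end Padic

section Sieve

variable {n : ℕ} {k : Fin n → ℕ} {c : Fin n → ℝ} {μ : ∀ p : Nat.Primes, Measure (Fin n → ℤ_[p])}
  [∀ p, (μ p).IsAddHaarMeasure] [∀ p, IsProbabilityMeasure (μ p)]

theorem padicReduce_padicEmbed (p : Nat.Primes) (e : ℕ) (x : Fin n → ℤ) :
    padicReduce n p e (padicEmbed n p x) = intReduce n (p ^ e) x :=
  funext fun i => map_intCast (PadicInt.toZModPow e) (x i)

theorem hasBoxDensity_forall_mem_isCylinder (hk : ∀ i, 1 ≤ k i) (hc : ∀ i, 0 < c i)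
    (S : Finset Nat.Primes) (C : ∀ p : Nat.Primes, Set (Fin n → ℤ_[p]))
    (hC : ∀ p ∈ S, IsCylinder (C p)) :
    HasBoxDensity k c {x | ∀ p ∈ S, padicEmbed n p x ∈ C p} (∏ p ∈ S, (μ p).real (C p)) := by
  choose e T hCT using fun q : S => hC q q.2
  have hset : {x | ∀ p ∈ S, padicEmbed n p x ∈ C p} =
      {x | ∀ q : S, intReduce n ((q : ℕ) ^ e q) x ∈ T q} := by
    ext x
    refine ⟨fun h q => ?_, fun h p hp => ?_⟩
    · simpa [hCT q, padicReduce_padicEmbed] using h q q.2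
    · simpa [hCT ⟨p, hp⟩, padicReduce_padicEmbed] using h ⟨p, hp⟩
  have hcop : Pairwise fun q q' : S => ((q : ℕ) ^ e q).Coprime ((q' : ℕ) ^ e q') :=
    fun q q' hne => Nat.Coprime.pow _ _ <|
      (Nat.coprime_primes q.1.2 q'.1.2).2 fun h => hne (Subtype.ext (Subtype.ext h))
  rw [hset, ← Finset.prod_coe_sort S]
  convert hasBoxDensity_forall_mem_of_coprime hk hc (fun q : S => (q : ℕ) ^ e q)
    (fun q => pow_pos q.1.2.pos _) hcop T using 2 with q
  rw [hCT q, measureReal_preimage_padicReduce]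

theorem hasBoxDensity_forall_mem_of_null_frontier (hk : ∀ i, 1 ≤ k i) (hc : ∀ i, 0 < c i)
    (S : Finset Nat.Primes) (V : ∀ p : Nat.Primes, Set (Fin n → ℤ_[p]))
    (hV : ∀ p ∈ S, μ p (frontier (V p)) = 0) :
    HasBoxDensity k c {x | ∀ p ∈ S, padicEmbed n p x ∈ V p} (∏ p ∈ S, (μ p).real (V p)) :=
  HasBoxDensity.of_sandwich hc (l := atTop)
    (fun e => hasBoxDensity_forall_mem_isCylinder hk hc S _ fun p _ =>
      isCylinder_innerCylinder e (V p))
    (fun e => hasBoxDensity_forall_mem_isCylinder hk hc S _ fun p _ =>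
      isCylinder_outerCylinder e (V p))
    (tendsto_finsetProd S fun p hp => (ENNReal.tendsto_toReal (measure_ne_top _ _)).comp
      (tendsto_measure_innerCylinder (μ p) (hV p hp)))
    (tendsto_finsetProd S fun p hp => (ENNReal.tendsto_toReal (measure_ne_top _ _)).comp
      (tendsto_measure_outerCylinder (μ p) (hV p hp)))
    (fun e _ hx p hp => innerCylinder_subset e (V p) (hx p hp))
    (fun e _ hx p hp => subset_outerCylinder e (V p) (hx p hp))

theorem hasBoxDensity_forall_mem_compl (hk : ∀ i, 1 ≤ k i) (hc : ∀ i, 0 < c i)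
    (S : Finset Nat.Primes) {U : ∀ p : Nat.Primes, Set (Fin n → ℤ_[p])}
    (hU : ∀ p, μ p (frontier (U p)) = 0) :
    HasBoxDensity k c {x | ∀ p ∈ S, padicEmbed n p x ∈ (U p)ᶜ}
      (∏ p ∈ S, (1 - (μ p).real (U p))) := by
  convert hasBoxDensity_forall_mem_of_null_frontier hk hc S (fun p => (U p)ᶜ)
    fun p _ => (frontier_compl (U p)).symm ▸ hU p using 2 with p
  exact (probReal_compl_eq_one_sub₀ (nullMeasurableSet_of_null_frontier (hU p))).symm

end Sieve

theorem setOf_forall_mem_compl_subset_union {n : ℕ} (U : ∀ p : Nat.Primes, Set (Fin n → ℤ_[p]))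
    {S : Finset Nat.Primes} {Y : ℝ} (hS : ∀ p : Nat.Primes, ((p : ℕ) : ℝ) ≤ Y → p ∈ S) :
    {x | ∀ p ∈ S, padicEmbed n p x ∈ (U p)ᶜ} ⊆ {x | ∀ p, padicEmbed n p x ∉ U p} ∪
      {x | ∃ p : Nat.Primes, Y < (p : ℕ) ∧ padicEmbed n p x ∈ U p} := fun x hx => by
  by_cases h : ∀ p, padicEmbed n p x ∉ U p
  · exact Or.inl h
  obtain ⟨p, hp⟩ := not_forall_not.1 h
  exact Or.inr ⟨p, lt_of_not_ge fun hpY => hx p (hS p hpY) hp, hp⟩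

theorem finite_setOf_primes_le (Y : ℝ) : {p : Nat.Primes | ((p : ℕ) : ℝ) ≤ Y}.Finite :=
  ((Set.finite_Iic ⌊Y⌋₊).preimage Nat.Primes.coe_nat_injective.injOn).subset
    fun _ hp => Nat.le_floor hp

theorem bddBelow_range_prod_of_nonneg {ι : Type*} {f : ι → ℝ} (h0 : ∀ i, 0 ≤ f i) :
    BddBelow (Set.range fun s : Finset ι => ∏ i ∈ s, f i) :=
  ⟨0, by rintro _ ⟨s, rfl⟩; exact Finset.prod_nonneg fun i _ => h0 i⟩

theorem hasProd_iInf_prod_of_le_one {ι : Type*} {f : ι → ℝ} (h0 : ∀ i, 0 ≤ f i)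
    (h1 : ∀ i, f i ≤ 1) : HasProd f (⨅ s : Finset ι, ∏ i ∈ s, f i) :=
  tendsto_atTop_ciInf
    (fun _ _ hst => Finset.prod_le_prod_of_subset_of_le_one hst (fun i _ => h0 i) fun i _ _ => h1 i)
    (bddBelow_range_prod_of_nonneg h0)

theorem ekedahl_sieve_density_general (n : ℕ)
    (k : Fin n → ℕ) (hk : ∀ i, 1 ≤ k i)
    (c : Fin n → ℝ) (hc : ∀ i, 0 < c i)
    (U : (p : Nat.Primes) → Set (Fin n → ℤ_[p]))
    (μ : (p : Nat.Primes) → Measure (Fin n → ℤ_[p]))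
    (hμ : ∀ p, (μ p).IsAddHaarMeasure) (hμprob : ∀ p, IsProbabilityMeasure (μ p))
    (hUbd : ∀ p, μ p (frontier (U p)) = 0)
    (hEk : EkedahlAdmissible n k c U) :
    Tendsto (fun X : ℝ => ((sievedBox n k c U X).ncard : ℝ) / boxVol n k c X) atTop
      (𝓝 (∏' p : Nat.Primes, (1 - (μ p (U p)).toReal))) := by
  simp only [← measureReal_def]
  set f : Nat.Primes → ℝ := fun p => 1 - (μ p).real (U p)
  have hf0 : ∀ p, 0 ≤ f p := fun p => sub_nonneg.2 measureReal_le_one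
  have hbdd := bddBelow_range_prod_of_nonneg hf0
  rw [(hasProd_iInf_prod_of_le_one hf0 fun p => sub_le_self _ measureReal_nonneg).tprod_eq]
  change HasBoxDensity k c {x | ∀ p, padicEmbed n p x ∉ U p} _
  refine tendsto_order.2 ⟨fun a ha => ?_, fun a ha => ?_⟩
  · obtain ⟨Y, hY⟩ := (hEk.eventually (gt_mem_nhds (half_pos (sub_pos.2 ha)))).exists
    set S := (finite_setOf_primes_le Y).toFinset
    filter_upwards [(tendsto_order.1 (hasBoxDensity_forall_mem_compl hk hc S hUbd)).1
        ((a + ⨅ s, ∏ p ∈ s, f p) / 2) (by linarith [ciInf_le hbdd S]),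
      eventually_boxDensity_lt_of_limsup_lt
        (A := {x | ∃ p : Nat.Primes, Y < (p : ℕ) ∧ padicEmbed n p x ∈ U p}) hk hc hY,
      eventually_gt_atTop 0] with X hA htail hX
    linarith [boxDensity_le_add (k := k) hc (setOf_forall_mem_compl_subset_union U
      fun p => (finite_setOf_primes_le Y).mem_toFinset.2) hX]
  · obtain ⟨S, hS⟩ := exists_lt_of_ciInf_lt ha
    filter_upwards [(tendsto_order.1 (hasBoxDensity_forall_mem_compl hk hc S hUbd)).2 a hS,
      eventually_gt_atTop 0] with X hA hX
    refine lt_of_le_of_lt (boxDensity_mono hc ?_ hX) hA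
    exact fun x hx p _ => hx p

/-- The Ekedahl sieve: for an Ekedahl-admissible triple `(𝒰, k, c)`, the density of the sieved
set of lattice points in the box `V_{k,c}(X)` converges, as `X → ∞`, to the product over all
primes `p` of `1 - μ_p(𝒰_p)`, where `μ_p` is the Haar probability measure on `ℤ_p^n`. -/
theorem ekedahl_sieve_density (n : ℕ) (hn : 1 ≤ n)
    (k : Fin n → ℕ) (hk : ∀ i, 1 ≤ k i)
    (c : Fin n → ℝ) (hc : ∀ i, 0 < c i)
    (U : (p : Nat.Primes) → Set (Fin n → ℤ_[p]))
    (μ : (p : Nat.Primes) → Measure (Fin n → ℤ_[p]))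
    (hμ : ∀ p, (μ p).IsAddHaarMeasure) (hμprob : ∀ p, IsProbabilityMeasure (μ p))
    (hUmeas : ∀ p, MeasurableSet (U p))
    (hUbd : ∀ p, μ p (frontier (U p)) = 0)
    (hEk : EkedahlAdmissible n k c U) :
    Tendsto (fun X : ℝ => ((sievedBox n k c U X).ncard : ℝ) / boxVol n k c X) atTop
      (𝓝 (∏' p : Nat.Primes, (1 - (μ p (U p)).toReal))) :=
  ekedahl_sieve_density_general n k hk c hc U μ hμ hμprob hUbd hEk

end
end

section
/- Take n = 2, \mathbf{k} = (3,2), \mathbf{c} = (1/4, 1/27), and for each prime p let \mathcal{U}_p = {(A,B) \in \mathbb{Z}_p^2 : 4A^3 + 27B^2 = 0} \cup (p^4\mathbb{Z}_p \times p^6\mathbb{Z}_p). Then the triple (\mathcal{U},\mathbf{k},\mathbf{c}) is Ekedahl-admissible. -/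
open MeasureTheory Filter Topology

noncomputable section

/-! Write `a = (X/4)^{1/3}` and `b = (X/27)^{1/2}` for the half-widths of the box. An integer point
`(A, B)` of the box lying in `𝒰_p` for some `p > Y` either lies on the discriminant curve
`4A³ + 27B² = 0`, which has at most two points over each `A`, or satisfies `q⁴ ∣ A` and `q⁶ ∣ B`
for some `Y < q ≤ X^{1/12}`: a larger `p` forces `A = B = 0`, which is on the curve. The curve
contributes `O(a)` points and each such `q` at most `(2a/q⁴ + 1)(2b/q⁶ + 1)`, so relative to the
volume `4ab` the exceptional points number at most `∑_{q > ⌊Y⌋} q⁻² + O(X^{-1/4})`, which is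
`≤ 1/⌊Y⌋ + O(X^{-1/4})`. -/

lemma Int.finite_setOf_abs_le (a : ℝ) : {m : ℤ | |(m : ℝ)| ≤ a}.Finite := by
  refine (Finset.Icc (-⌊a⌋) ⌊a⌋).finite_toSet.subset fun m hm => ?_
  rw [Set.mem_ofPred_eq, abs_le] at hm
  simp only [Finset.coe_Icc, Set.mem_Icc]
  exact ⟨neg_le.1 (Int.le_floor.2 (by push_cast; linarith)), Int.le_floor.2 hm.2⟩

lemma Int.ncard_setOf_abs_le_dvd_le {a : ℝ} (ha : 0 ≤ a) {d : ℕ} (hd : 0 < d) :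
    ({m : ℤ | |(m : ℝ)| ≤ a ∧ (d : ℤ) ∣ m}.ncard : ℝ) ≤ 2 * a / d + 1 := by
  set n := ⌊a / d⌋ with hn
  have hd' : (0 : ℝ) < d := by exact_mod_cast hd
  have hsub : {m : ℤ | |(m : ℝ)| ≤ a ∧ (d : ℤ) ∣ m} ⊆
      (fun k : ℤ => (d : ℤ) * k) '' (Finset.Icc (-n) n : Set ℤ) := by
    rintro _ ⟨hm, k, rfl⟩
    refine ⟨k, ?_, rfl⟩
    have hk : |(k : ℝ)| ≤ a / d := by
      rw [le_div_iff₀ hd', mul_comm]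
      simpa [abs_mul, abs_of_pos hd'] using hm
    rw [abs_le] at hk
    simp only [Finset.coe_Icc, Set.mem_Icc, hn]
    exact ⟨neg_le.1 (Int.le_floor.2 (by push_cast; linarith)), Int.le_floor.2 hk.2⟩
  have hcard : ((Finset.Icc (-n) n).card : ℝ) = 2 * n + 1 := by
    have hn0 : 0 ≤ n := Int.floor_nonneg.2 (by positivity)
    rw [Int.card_Icc, show n + 1 - -n = 2 * n + 1 by ring]
    exact_mod_cast Int.toNat_of_nonneg (by omega)
  calc ({m : ℤ | |(m : ℝ)| ≤ a ∧ (d : ℤ) ∣ m}.ncard : ℝ)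
      ≤ (Finset.Icc (-n) n).card := by
        exact_mod_cast ((Set.ncard_le_ncard hsub (Set.toFinite _)).trans
          (Set.ncard_image_le (Set.toFinite _))).trans_eq (Set.ncard_coe_finset _)
    _ = 2 * n + 1 := hcard
    _ ≤ 2 * a / d + 1 := by
        have := Int.floor_le (a / d)
        rw [mul_div_assoc]; linarith

lemma Int.eq_zero_of_dvd_of_abs_le_of_lt {m d : ℤ} {a : ℝ} (hdvd : d ∣ m) (hm : |(m : ℝ)| ≤ a)
    (ha : a < d) : m = 0 :=
  Int.eq_zero_of_abs_lt_dvd hdvd (by exact_mod_cast hm.trans_lt ha)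

lemma finite_setOf_fin_two {α : Type*} {S T : Set α} (hS : S.Finite) (hT : T.Finite) :
    {x : Fin 2 → α | x 0 ∈ S ∧ x 1 ∈ T}.Finite :=
  (hS.prod hT).preimage (finTwoArrowEquiv α).injective.injOn

lemma ncard_setOf_fin_two {α : Type*} (S T : Set α) :
    {x : Fin 2 → α | x 0 ∈ S ∧ x 1 ∈ T}.ncard = S.ncard * T.ncard := by
  rw [← Set.ncard_prod, ← Set.ncard_preimage_of_injective_subset_range
    (finTwoArrowEquiv α).injective ((finTwoArrowEquiv α).range_eq_univ ▸ Set.subset_univ _)]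
  rfl

lemma ncard_le_two_mul_of_sq_eq {S : Set ℤ} (hS : S.Finite) {f : ℤ → ℤ} {s : Set (Fin 2 → ℤ)}
    (hs : ∀ x ∈ s, x 0 ∈ S ∧ x 1 ^ 2 = f (x 0)) : s.ncard ≤ 2 * S.ncard := by
  have hinj : Set.InjOn (fun x : Fin 2 → ℤ => (x 0, decide (0 ≤ x 1))) s := by
    intro x hx y hy hxy
    simp only [Prod.mk.injEq, decide_eq_decide] at hxy
    obtain ⟨h0, hsign⟩ := hxy
    have habs : |x 1| = |y 1| :=
      (sq_eq_sq_iff_abs_eq_abs _ _).1 (by rw [(hs x hx).2, (hs y hy).2, h0])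
    have h1 : x 1 = y 1 := by
      rcases le_or_gt 0 (x 1) with h | h
      · rwa [abs_of_nonneg h, abs_of_nonneg (hsign.1 h)] at habs
      · rw [abs_of_neg h, abs_of_neg (not_le.1 (mt hsign.2 h.not_ge))] at habs
        linarith
    ext i; fin_cases i <;> assumption
  calc s.ncard ≤ (S ×ˢ (Set.univ : Set Bool)).ncard :=
        Set.ncard_le_ncard_of_injOn _ (fun x hx => ⟨(hs x hx).1, Set.mem_univ _⟩) hinj
          (hS.prod Set.finite_univ)
    _ = 2 * S.ncard := by simp [Set.ncard_prod, mul_comm]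

lemma Filter.limsup_mem_Icc_of_le_add {ι : Type*} {l : Filter ι} [l.NeBot] {f g : ι → ℝ} {c : ℝ}
    (hf : ∀ᶠ x in l, 0 ≤ f x) (hfg : ∀ᶠ x in l, f x ≤ c + g x) (hg : Tendsto g l (𝓝 0)) :
    limsup f l ∈ Set.Icc 0 c := by
  have hcg : Tendsto (fun x => c + g x) l (𝓝 c) := by simpa using tendsto_const_nhds.add hg
  have hbdd : IsBoundedUnder (· ≤ ·) l f := hcg.isBoundedUnder_le.mono_le hfg
  refine ⟨le_limsup_of_frequently_le hf.frequently hbdd, ?_⟩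
  calc limsup f l ≤ limsup (fun x => c + g x) l :=
        limsup_le_limsup hfg (isBoundedUnder_of_eventually_ge hf).isCoboundedUnder_le
          hcg.isBoundedUnder_le
    _ = c := hcg.limsup_eq

def singularOrNonminimal (p : Nat.Primes) : Set (Fin 2 → ℤ_[p]) :=
  {x | 4 * (x 0) ^ 3 + 27 * (x 1) ^ 2 = 0 ∨ ((p : ℤ_[p]) ^ 4 ∣ x 0 ∧ (p : ℤ_[p]) ^ 6 ∣ x 1)}

lemma padicEmbed_mem_singularOrNonminimal_iff (p : Nat.Primes) (x : Fin 2 → ℤ) :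
    padicEmbed 2 p x ∈ singularOrNonminimal p ↔
      4 * x 0 ^ 3 + 27 * x 1 ^ 2 = 0 ∨ ((p : ℤ) ^ 4 ∣ x 0 ∧ (p : ℤ) ^ 6 ∣ x 1) := by
  have hdisc : 4 * ((x 0 : ℤ) : ℤ_[p]) ^ 3 + 27 * ((x 1 : ℤ) : ℤ_[p]) ^ 2 =
      ((4 * x 0 ^ 3 + 27 * x 1 ^ 2 : ℤ) : ℤ_[p]) := by push_cast; ring
  simp only [singularOrNonminimal, padicEmbed, Set.mem_ofPred_eq, hdisc, Int.cast_eq_zero,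
    PadicInt.pow_p_dvd_int_iff]

def intBox (a b : ℝ) : Set (Fin 2 → ℤ) := {x | |(x 0 : ℝ)| ≤ a ∧ |(x 1 : ℝ)| ≤ b}

def singularPoints (a b : ℝ) : Set (Fin 2 → ℤ) :=
  intBox a b ∩ {x | 4 * x 0 ^ 3 + 27 * x 1 ^ 2 = 0}

def nonminimalPoints (a b : ℝ) (q : ℕ) : Set (Fin 2 → ℤ) :=
  intBox a b ∩ {x | (q : ℤ) ^ 4 ∣ x 0 ∧ (q : ℤ) ^ 6 ∣ x 1}

def exceptionalPoints (a b Y : ℝ) : Set (Fin 2 → ℤ) :=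
  {x ∈ intBox a b | ∃ p : Nat.Primes, Y < (p : ℕ) ∧ padicEmbed 2 p x ∈ singularOrNonminimal p}

lemma finite_intBox (a b : ℝ) : (intBox a b).Finite :=
  finite_setOf_fin_two (Int.finite_setOf_abs_le a) (Int.finite_setOf_abs_le b)

lemma ncard_singularPoints_le {a : ℝ} (ha : 0 ≤ a) (b : ℝ) :
    ((singularPoints a b).ncard : ℝ) ≤ 2 * (2 * a + 1) := by
  have hs : ∀ x ∈ singularPoints a b,
      x 0 ∈ {m : ℤ | |(m : ℝ)| ≤ a} ∧ x 1 ^ 2 = -(4 * x 0 ^ 3) / 27 := fun x ⟨hbox, hdisc⟩ =>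
    ⟨hbox.1, Int.eq_ediv_of_mul_eq_right (by norm_num) (by linear_combination hdisc.out)⟩
  have hS : ({m : ℤ | |(m : ℝ)| ≤ a}.ncard : ℝ) ≤ 2 * a + 1 := by
    simpa using Int.ncard_setOf_abs_le_dvd_le ha one_pos
  calc ((singularPoints a b).ncard : ℝ) ≤ 2 * {m : ℤ | |(m : ℝ)| ≤ a}.ncard := by
        exact_mod_cast ncard_le_two_mul_of_sq_eq (Int.finite_setOf_abs_le a)
          (f := fun m => -(4 * m ^ 3) / 27) hs
    _ ≤ 2 * (2 * a + 1) := by linarith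

lemma ncard_nonminimalPoints_le {a b : ℝ} (ha : 0 ≤ a) (hb : 0 ≤ b) {q : ℕ} (hq : 0 < q) :
    ((nonminimalPoints a b q).ncard : ℝ) ≤ (2 * a / q ^ 4 + 1) * (2 * b / q ^ 6 + 1) := by
  have hprod : nonminimalPoints a b q =
      {x : Fin 2 → ℤ | x 0 ∈ {m : ℤ | |(m : ℝ)| ≤ a ∧ ((q ^ 4 : ℕ) : ℤ) ∣ m} ∧
        x 1 ∈ {m : ℤ | |(m : ℝ)| ≤ b ∧ ((q ^ 6 : ℕ) : ℤ) ∣ m}} := by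
    ext x
    simp only [nonminimalPoints, intBox, Set.mem_inter_iff, Set.mem_ofPred_eq, Nat.cast_pow]
    tauto
  rw [hprod, ncard_setOf_fin_two, Nat.cast_mul]
  have h4 := Int.ncard_setOf_abs_le_dvd_le ha (pow_pos hq 4)
  have h6 := Int.ncard_setOf_abs_le_dvd_le hb (pow_pos hq 6)
  push_cast at h4 h6
  exact mul_le_mul h4 h6 (Nat.cast_nonneg _) (by positivity)

lemma exceptionalPoints_subset {a b Y : ℝ} {Z : ℕ} (ha : a < ((Z : ℝ) + 1) ^ 4)
    (hb : b < ((Z : ℝ) + 1) ^ 6) :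
    exceptionalPoints a b Y ⊆
      singularPoints a b ∪ ⋃ q ∈ Finset.Ioc ⌊Y⌋₊ Z, nonminimalPoints a b q := by
  rintro x ⟨hbox, p, hYp, hp⟩
  rw [padicEmbed_mem_singularOrNonminimal_iff] at hp
  rcases hp with hdisc | ⟨h4, h6⟩
  · exact Or.inl ⟨hbox, hdisc⟩
  by_cases hpZ : (p : ℕ) ≤ Z
  · have hq : (p : ℕ) ∈ Finset.Ioc ⌊Y⌋₊ Z :=
      Finset.mem_Ioc.2 ⟨(Nat.floor_lt' p.2.ne_zero).2 hYp, hpZ⟩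
    exact Or.inr (Set.mem_biUnion hq ⟨hbox, h4, h6⟩)
  have hp : (Z : ℝ) + 1 ≤ (p : ℕ) := by exact_mod_cast not_le.1 hpZ
  have h0 := Int.eq_zero_of_dvd_of_abs_le_of_lt h4 hbox.1
    (by push_cast; exact ha.trans_le (pow_le_pow_left₀ (by positivity) hp 4))
  have h1 := Int.eq_zero_of_dvd_of_abs_le_of_lt h6 hbox.2
    (by push_cast; exact hb.trans_le (pow_le_pow_left₀ (by positivity) hp 6))
  exact Or.inl ⟨hbox, by simp [h0, h1]⟩

lemma ncard_exceptionalPoints_le {a b Y : ℝ} (ha : 0 ≤ a) (hb : 0 ≤ b) {Z : ℕ}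
    (haZ : a < ((Z : ℝ) + 1) ^ 4) (hbZ : b < ((Z : ℝ) + 1) ^ 6) :
    ((exceptionalPoints a b Y).ncard : ℝ) ≤
      2 * (2 * a + 1) + ∑ q ∈ Finset.Ioc ⌊Y⌋₊ Z, (2 * a / q ^ 4 + 1) * (2 * b / q ^ 6 + 1) := by
  have hfin : (singularPoints a b ∪ ⋃ q ∈ Finset.Ioc ⌊Y⌋₊ Z, nonminimalPoints a b q).Finite :=
    (finite_intBox a b).subset (Set.union_subset Set.inter_subset_left
      (Set.iUnion₂_subset fun _ _ => Set.inter_subset_left))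
  have hcount := (Set.ncard_le_ncard (exceptionalPoints_subset haZ hbZ) hfin).trans
    ((Set.ncard_union_le _ _).trans (Nat.add_le_add_left (Finset.set_ncard_biUnion_le _ _) _))
  calc _ ≤ ((singularPoints a b).ncard : ℝ) +
        ∑ q ∈ Finset.Ioc ⌊Y⌋₊ Z, ((nonminimalPoints a b q).ncard : ℝ) := by
        exact_mod_cast hcount
    _ ≤ _ := add_le_add (ncard_singularPoints_le ha b) (Finset.sum_le_sum fun q hq =>
        ncard_nonminimalPoints_le ha hb (Nat.zero_lt_of_lt (Finset.mem_Ioc.1 hq).1))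

lemma count_bound_div_le {a b : ℝ} (ha : 0 < a) (hb : 0 < b) {N Z : ℕ} (hN : N ≠ 0) :
    (2 * (2 * a + 1) + ∑ q ∈ Finset.Ioc N Z, (2 * a / q ^ 4 + 1) * (2 * b / q ^ 6 + 1)) /
        (4 * a * b) ≤ (N : ℝ)⁻¹ + (2 * (2 * a + 1) + Z * (2 * a + 2 * b + 1)) / (4 * a * b) := by
  have hterm : ∀ q ∈ Finset.Ioc N Z, (2 * a / q ^ 4 + 1) * (2 * b / q ^ 6 + 1) ≤
      4 * a * b * ((q : ℝ) ^ 2)⁻¹ + (2 * a + 2 * b + 1) := fun q hq => by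
    have hq1 : (1 : ℝ) ≤ q := by exact_mod_cast Nat.one_le_of_lt (Finset.mem_Ioc.1 hq).1
    have hq0 : (q : ℝ) ≠ 0 := (one_pos.trans_le hq1).ne'
    have hu0 : 0 ≤ (q : ℝ)⁻¹ := by positivity
    have hu1 : (q : ℝ)⁻¹ ≤ 1 := inv_le_one_of_one_le₀ hq1
    rw [← inv_pow, show (2 * a / q ^ 4 + 1) * (2 * b / q ^ 6 + 1) = 4 * a * b * (q : ℝ)⁻¹ ^ 10 +
      2 * a * (q : ℝ)⁻¹ ^ 4 + 2 * b * (q : ℝ)⁻¹ ^ 6 + 1 by simp only [inv_pow]; field_simp; ring]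
    have h10 : (q : ℝ)⁻¹ ^ 10 ≤ (q : ℝ)⁻¹ ^ 2 := pow_le_pow_of_le_one hu0 hu1 (by norm_num)
    nlinarith [mul_le_mul_of_nonneg_left h10 (by positivity : 0 ≤ 4 * a * b),
      mul_le_mul_of_nonneg_left (pow_le_one₀ (n := 4) hu0 hu1) ha.le,
      mul_le_mul_of_nonneg_left (pow_le_one₀ (n := 6) hu0 hu1) hb.le]
  have htail : ∑ q ∈ Finset.Ioc N Z, ((q : ℝ) ^ 2)⁻¹ ≤ (N : ℝ)⁻¹ := by
    rcases le_or_gt N Z with hNZ | hNZ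
    · exact (sum_Ioc_inv_sq_le_sub hN hNZ).trans (sub_le_self _ (by positivity))
    · simp [Finset.Ioc_eq_empty_of_le hNZ.le]
  have hcard : ((Finset.Ioc N Z).card : ℝ) ≤ Z := by
    rw [Nat.card_Ioc]; exact_mod_cast Nat.sub_le Z N
  have hsum : ∑ q ∈ Finset.Ioc N Z, (2 * a / q ^ 4 + 1) * (2 * b / q ^ 6 + 1) ≤
      4 * a * b * (N : ℝ)⁻¹ + Z * (2 * a + 2 * b + 1) :=
    calc _ ≤ ∑ q ∈ Finset.Ioc N Z, (4 * a * b * ((q : ℝ) ^ 2)⁻¹ + (2 * a + 2 * b + 1)) :=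
          Finset.sum_le_sum hterm
      _ = 4 * a * b * ∑ q ∈ Finset.Ioc N Z, ((q : ℝ) ^ 2)⁻¹ +
            (Finset.Ioc N Z).card * (2 * a + 2 * b + 1) := by
          rw [Finset.sum_add_distrib, Finset.mul_sum, Finset.sum_const, nsmul_eq_mul]
      _ ≤ _ := by gcongr
  calc _ ≤ (2 * (2 * a + 1) + (4 * a * b * (N : ℝ)⁻¹ + Z * (2 * a + 2 * b + 1))) /
        (4 * a * b) := by gcongr
    _ = _ := by field_simp; ring

lemma weierstrass_error_le {α β s : ℝ} (hα : 0 < α) (hβ : 0 < β) (hs : 1 ≤ s) {Z : ℕ}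
    (hZ : (Z : ℝ) ≤ s) :
    (2 * (2 * (α * s ^ 4) + 1) + Z * (2 * (α * s ^ 4) + 2 * (β * s ^ 6) + 1)) /
        (4 * (α * s ^ 4) * (β * s ^ 6)) ≤ (6 * α + 2 * β + 3) / (4 * α * β) / s ^ 3 := by
  have h1 : 1 ≤ s ^ 7 := one_le_pow₀ hs
  have h4 : s ^ 4 ≤ s ^ 7 := pow_le_pow_right₀ hs (by norm_num)
  have h5 : s ^ 5 ≤ s ^ 7 := pow_le_pow_right₀ hs (by norm_num)
  have h7 : s ≤ s ^ 7 := le_self_pow₀ hs (by norm_num)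
  have hnum : 2 * (2 * (α * s ^ 4) + 1) + Z * (2 * (α * s ^ 4) + 2 * (β * s ^ 6) + 1) ≤
      (6 * α + 2 * β + 3) * s ^ 7 :=
    calc _ ≤ 2 * (2 * (α * s ^ 4) + 1) + s * (2 * (α * s ^ 4) + 2 * (β * s ^ 6) + 1) := by
          gcongr
      _ = 4 * α * s ^ 4 + 2 + 2 * α * s ^ 5 + 2 * β * s ^ 7 + s := by ring
      _ ≤ _ := by nlinarith
  have hs0 : 0 < s := one_pos.trans_le hs
  calc _ ≤ (6 * α + 2 * β + 3) * s ^ 7 / (4 * (α * s ^ 4) * (β * s ^ 6)) := by gcongr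
    _ = _ := by field_simp

lemma latticeBox_weierstrass (X : ℝ) :
    latticeBox 2 ![3, 2] ![1/4, 1/27] X =
      intBox ((1/4 * X) ^ (3 : ℝ)⁻¹) ((1/27 * X) ^ (2 : ℝ)⁻¹) := by
  ext x; simp [latticeBox, intBox, Fin.forall_fin_two]

lemma boxVol_weierstrass (X : ℝ) :
    boxVol 2 ![3, 2] ![1/4, 1/27] X = 4 * (1/4 * X) ^ (3 : ℝ)⁻¹ * (1/27 * X) ^ (2 : ℝ)⁻¹ := by
  simp [boxVol, Fin.prod_univ_two]; ring

lemma exists_exceptional_ratio_le : ∃ C : ℝ, ∀ Y ≥ (1 : ℝ), ∀ X ≥ (1 : ℝ),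
    ({x ∈ latticeBox 2 ![3, 2] ![1/4, 1/27] X | ∃ p : Nat.Primes, Y < (p : ℕ) ∧
        padicEmbed 2 p x ∈ singularOrNonminimal p}.ncard : ℝ) / boxVol 2 ![3, 2] ![1/4, 1/27] X ≤
      (⌊Y⌋₊ : ℝ)⁻¹ + C / (X ^ (12 : ℝ)⁻¹) ^ 3 := by
  set α : ℝ := (1/4) ^ (3 : ℝ)⁻¹
  set β : ℝ := (1/27) ^ (2 : ℝ)⁻¹
  have hα : 0 < α := by positivity
  have hβ : 0 < β := by positivity
  have hα1 : α ≤ 1 := Real.rpow_le_one (by norm_num) (by norm_num) (by norm_num)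
  have hβ1 : β ≤ 1 := Real.rpow_le_one (by norm_num) (by norm_num) (by norm_num)
  refine ⟨(6 * α + 2 * β + 3) / (4 * α * β), fun Y hY X hX => ?_⟩
  set s := X ^ (12 : ℝ)⁻¹
  have hX0 : 0 ≤ X := zero_le_one.trans hX
  have hs : 1 ≤ s := Real.one_le_rpow hX (by norm_num)
  have ha : (1/4 * X) ^ (3 : ℝ)⁻¹ = α * s ^ 4 := by
    rw [Real.mul_rpow (by norm_num) hX0, ← Real.rpow_natCast, ← Real.rpow_mul hX0,
      show (12 : ℝ)⁻¹ * (4 : ℕ) = 3⁻¹ by norm_num]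
  have hb : (1/27 * X) ^ (2 : ℝ)⁻¹ = β * s ^ 6 := by
    rw [Real.mul_rpow (by norm_num) hX0, ← Real.rpow_natCast, ← Real.rpow_mul hX0,
      show (12 : ℝ)⁻¹ * (6 : ℕ) = 2⁻¹ by norm_num]
  have hsZ : s < ⌊s⌋₊ + 1 := Nat.lt_floor_add_one s
  have haZ : α * s ^ 4 < ((⌊s⌋₊ : ℝ) + 1) ^ 4 :=
    (mul_le_of_le_one_left (by positivity) hα1).trans_lt (by gcongr)
  have hbZ : β * s ^ 6 < ((⌊s⌋₊ : ℝ) + 1) ^ 6 :=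
    (mul_le_of_le_one_left (by positivity) hβ1).trans_lt (by gcongr)
  rw [latticeBox_weierstrass, boxVol_weierstrass, ha, hb]
  calc _ ≤ (2 * (2 * (α * s ^ 4) + 1) + ∑ q ∈ Finset.Ioc ⌊Y⌋₊ ⌊s⌋₊,
        (2 * (α * s ^ 4) / q ^ 4 + 1) * (2 * (β * s ^ 6) / q ^ 6 + 1)) /
          (4 * (α * s ^ 4) * (β * s ^ 6)) := by
        gcongr; exact ncard_exceptionalPoints_le (by positivity) (by positivity) haZ hbZ
    _ ≤ _ := count_bound_div_le (by positivity) (by positivity) (Nat.floor_pos.2 hY).ne'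
    _ ≤ _ := add_le_add le_rfl (weierstrass_error_le hα hβ hs (Nat.floor_le (by positivity)))

/-- The triple cutting out (the coefficient space of) the family of all elliptic curves over `ℚ`
is Ekedahl-admissible: here `n = 2`, `k = (3,2)`, `c = (1/4, 1/27)`, and
`𝒰_p = {(A,B) : 4A³ + 27B² = 0} ∪ (p⁴ℤ_p × p⁶ℤ_p)`. -/
theorem ellipticCurveFamily_ekedahlAdmissible :
    EkedahlAdmissible 2 ![3, 2] ![1/4, 1/27]
      (fun p : Nat.Primes =>
        {x : Fin 2 → ℤ_[p] | 4 * (x 0) ^ 3 + 27 * (x 1) ^ 2 = 0 ∨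
          ((p : ℤ_[p]) ^ 4 ∣ x 0 ∧ (p : ℤ_[p]) ^ 6 ∣ x 1)}) := by
  obtain ⟨C, hC⟩ := exists_exceptional_ratio_le
  have hvol : ∀ X ≥ (1 : ℝ), 0 ≤ boxVol 2 ![3, 2] ![1/4, 1/27] X := fun X hX => by
    have : 0 ≤ X := zero_le_one.trans hX
    rw [boxVol_weierstrass]; positivity
  have hlimsup : ∀ Y ≥ (1 : ℝ), limsup (fun X : ℝ =>
      ({x ∈ latticeBox 2 ![3, 2] ![1/4, 1/27] X | ∃ p : Nat.Primes, Y < (p : ℕ) ∧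
        padicEmbed 2 p x ∈ singularOrNonminimal p}.ncard : ℝ) /
          boxVol 2 ![3, 2] ![1/4, 1/27] X) atTop ∈ Set.Icc 0 (⌊Y⌋₊ : ℝ)⁻¹ := fun Y hY =>
    limsup_mem_Icc_of_le_add
      ((eventually_ge_atTop 1).mono fun X hX => div_nonneg (Nat.cast_nonneg _) (hvol X hX))
      ((eventually_ge_atTop 1).mono fun X hX => hC Y hY X hX)
      (tendsto_const_nhds.div_atTop
        ((tendsto_pow_atTop (by norm_num)).comp (tendsto_rpow_atTop (by norm_num))))
  exact squeeze_zero' ((eventually_ge_atTop 1).mono fun Y hY => (hlimsup Y hY).1)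
    ((eventually_ge_atTop 1).mono fun Y hY => (hlimsup Y hY).2)
    (tendsto_inv_atTop_zero.comp (tendsto_natCast_atTop_atTop.comp tendsto_nat_floor_atTop))

end
end

section
/- Let p \ge 5 be a prime. Then the number of pairs (a,b) \in F_p^2 such that the polynomial T^3 + aT + b is separable over F_p and has exactly n roots in F_p equals: (p^2-1)/3 if n = 0; p(p-1)/2 if n = 1; and (p-1)(p-2)/6 if n = 3. -/
/-!
For `p ≥ 5`, `T³ + aT + b` is separable iff `4a³ + 27b² ≠ 0`, and a separable cubic with two
distinct roots `r, s` splits with third root `-(r + s)`, so it has `0`, `1` or `3` roots. The three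
counts `N₀, N₁, N₃` are then pinned down by three double countings over the nonsingular pairs:
* `N₀ + N₁ + N₃ = p² - p`, because the singular pairs are exactly the `(-3t², 2t³)`;
* `N₁ + 3N₃ = (p - 1)²`, counting cubics with a marked root `r`: the pair `(r, a)` determines
  `b = -r³ - ar`, and `4a³ + 27b² = (3r² + a)²(3r² + 4a)` excludes two values of `a`
  (one if `r = 0`);
* `6N₃ = (p - 1)(p - 2)`, counting cubics with an ordered pair of distinct roots `(r, s)`, which
  determines the cubic, and `4a³ + 27b² = -((r - s)(r + 2s)(2r + s))²` excludes three values of `s`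
  (one if `r = 0`).
-/

open Polynomial

noncomputable section

/-- The number of pairs `(a,b) ∈ F_p²` such that `T³ + aT + b` is separable and has exactly
`n` roots in `F_p`. -/
def cubicPairCount (p : ℕ) [Fact p.Prime] (n : ℕ) : ℕ :=
  Set.ncard {ab : ZMod p × ZMod p |
    (X ^ 3 + C ab.1 * X + C ab.2 : Polynomial (ZMod p)).Separable ∧
      Set.ncard {x : ZMod p | x ^ 3 + ab.1 * x + ab.2 = 0} = n}

open Finset

section Fiber
variable {α β : Type*} [Fintype α] [Fintype β] [DecidableEq β]

theorem card_filter_notMem_add_sum_card (S : α → Finset β) :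
    #{x : α × β | x.2 ∉ S x.1} + ∑ r, #(S r) = Fintype.card α * Fintype.card β := by
  have hfiber : ∀ r, ∑ b, (if b ∉ S r then 1 else 0) + #(S r) = Fintype.card β := fun r => by
    rw [← card_filter, ← compl_filter, filter_mem_eq_inter, univ_inter, card_compl_add_card]
  rw [card_filter, Fintype.sum_prod_type, ← sum_add_distrib]
  simp only [hfiber, sum_const, card_univ, smul_eq_mul]

theorem card_filter_notMem_of_card_eq [DecidableEq α] (S : α → Finset β) (r₀ : α) {k : ℕ}
    (h₀ : #(S r₀) = 1) (hk : ∀ r ≠ r₀, #(S r) = k) :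
    #{x : α × β | x.2 ∉ S x.1} + k * Fintype.card α + 1 = Fintype.card α * Fintype.card β + k := by
  have hsum : ∑ r, #(S r) + k = k * Fintype.card α + 1 := calc
    ∑ r, #(S r) + k = ∑ r, (#(S r) + if r = r₀ then k else 0) := by
      rw [sum_add_distrib, sum_ite_eq']; simp
    _ = ∑ r, (k + if r = r₀ then 1 else 0) := by
      refine sum_congr rfl fun r _ => ?_
      by_cases hr : r = r₀
      · simp [hr, h₀, add_comm]
      · simp [hr, hk r hr]
    _ = k * Fintype.card α + 1 := by
      rw [sum_add_distrib, sum_ite_eq']; simp [mul_comm]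
  have := card_filter_notMem_add_sum_card S
  omega

end Fiber

section Cubic
variable {F : Type*} [Field F]

/- `4 * a ^ 3 + 27 * b ^ 2` is minus the discriminant of `X ^ 3 + a X + b`; the names below call it
`disc`. -/

theorem exists_eq_of_disc_eq_zero (h2 : (2 : F) ≠ 0) (h3 : (3 : F) ≠ 0) {a b : F}
    (hD : 4 * a ^ 3 + 27 * b ^ 2 = 0) : ∃ t : F, a = -(3 * t ^ 2) ∧ b = 2 * t ^ 3 := by
  by_cases ha : a = 0
  · subst ha
    have h27 : (27 : F) ≠ 0 := by simpa [show (27 : F) = 3 ^ 3 by norm_num] using h3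
    have hb : b = 0 := by simpa [h27] using hD
    exact ⟨0, by simp, by simp [hb]⟩
  · exact ⟨-(3 * b) / (2 * a), by field_simp; linear_combination hD,
      by field_simp; linear_combination b * hD⟩

theorem derivative_cubic (a b : F) :
    derivative (X ^ 3 + C a * X + C b : F[X]) = 3 * X ^ 2 + C a := by
  rw [derivative_add, derivative_add, derivative_X_pow, derivative_C_mul_X, derivative_C,
    C_eq_natCast]
  simp

theorem separable_cubic_iff (h2 : (2 : F) ≠ 0) (h3 : (3 : F) ≠ 0) (a b : F) :
    (X ^ 3 + C a * X + C b : F[X]).Separable ↔ 4 * a ^ 3 + 27 * b ^ 2 ≠ 0 := by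
  constructor
  · intro hsep hD
    obtain ⟨t, rfl, rfl⟩ := exists_eq_of_disc_eq_zero h2 h3 hD
    -- `t` is a double root
    have hsimple := hsep.eval₂_derivative_ne_zero (RingHom.id F) (x := t)
    simp only [eval₂_id, derivative_cubic] at hsimple
    exact hsimple (by simp; ring) (by simp)
  · intro hD
    -- the Bezout relation behind `Res(f, f') = 4a³ + 27b²`
    refine ⟨C (4 * a ^ 3 + 27 * b ^ 2)⁻¹ * (C (-(18 * a)) * X + C (27 * b)),
      C (4 * a ^ 3 + 27 * b ^ 2)⁻¹ * (C (6 * a) * X ^ 2 + C (-(9 * b)) * X + C (4 * a ^ 2)), ?_⟩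
    have bezout : (C (-(18 * a)) * X + C (27 * b)) * (X ^ 3 + C a * X + C b)
        + (C (6 * a) * X ^ 2 + C (-(9 * b)) * X + C (4 * a ^ 2)) * (3 * X ^ 2 + C a)
        = C (4 * a ^ 3 + 27 * b ^ 2) := by
      simp only [map_mul, map_add, map_pow, map_neg, map_ofNat]; ring
    rw [derivative_cubic, mul_assoc, mul_assoc, ← mul_add, bezout, ← C_mul, inv_mul_cancel₀ hD,
      C_1]

theorem coeffs_eq_of_two_roots {a b r s : F} (hrs : r ≠ s) (hr : r ^ 3 + a * r + b = 0)
    (hs : s ^ 3 + a * s + b = 0) : a = -(r ^ 2 + r * s + s ^ 2) ∧ b = r * s * (r + s) := by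
  have ha : r ^ 2 + r * s + s ^ 2 + a = 0 := by
    refine (mul_eq_zero.mp ?_).resolve_left (sub_ne_zero.mpr hrs)
    linear_combination hr - hs
  exact ⟨by linear_combination ha, by linear_combination hr - r * ha⟩

theorem disc_of_root (a r : F) :
    4 * a ^ 3 + 27 * (-(r ^ 3) - a * r) ^ 2 = (3 * r ^ 2 + a) ^ 2 * (3 * r ^ 2 + 4 * a) := by
  ring

theorem disc_of_two_roots (r s : F) :
    4 * (-(r ^ 2 + r * s + s ^ 2)) ^ 3 + 27 * (r * s * (r + s)) ^ 2
      = -((r - s) * (r + 2 * s) * (2 * r + s)) ^ 2 := by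
  ring

variable [DecidableEq F]

theorem disc_of_root_ne_zero_iff (h2 : (2 : F) ≠ 0) (a r : F) :
    4 * a ^ 3 + 27 * (-(r ^ 3) - a * r) ^ 2 ≠ 0 ↔
      a ∉ ({-(3 * r ^ 2), -(3 * r ^ 2) / 4} : Finset F) := by
  have h4 : (4 : F) ≠ 0 := by simpa [show (4 : F) = 2 ^ 2 by norm_num] using h2
  rw [disc_of_root, mul_ne_zero_iff, pow_ne_zero_iff two_ne_zero, mem_insert, mem_singleton,
    eq_div_iff h4, not_or]
  exact and_congr (not_congr ⟨fun h => by linear_combination h, fun h => by linear_combination h⟩)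
    (not_congr ⟨fun h => by linear_combination h, fun h => by linear_combination h⟩)

theorem disc_of_two_roots_ne_zero_iff (h2 : (2 : F) ≠ 0) (r s : F) :
    4 * (-(r ^ 2 + r * s + s ^ 2)) ^ 3 + 27 * (r * s * (r + s)) ^ 2 ≠ 0 ↔
      s ∉ ({r, -(r / 2), -(2 * r)} : Finset F) := by
  rw [disc_of_two_roots, neg_ne_zero, pow_ne_zero_iff two_ne_zero, mul_ne_zero_iff,
    mul_ne_zero_iff, and_assoc, mem_insert, mem_insert, mem_singleton, ← neg_div, eq_div_iff h2,
    not_or, not_or]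
  exact and_congr (not_congr ⟨fun h => by linear_combination -h, fun h => by linear_combination -h⟩)
    (and_congr (not_congr ⟨fun h => by linear_combination h, fun h => by linear_combination h⟩)
      (not_congr ⟨fun h => by linear_combination h, fun h => by linear_combination h⟩))

variable [Fintype F]

def cubicRoots (a b : F) : Finset F := {x | x ^ 3 + a * x + b = 0}

@[simp] theorem mem_cubicRoots {a b x : F} : x ∈ cubicRoots a b ↔ x ^ 3 + a * x + b = 0 := by
  simp [cubicRoots]

theorem card_cubicRoots_mem {a b : F} (hD : 4 * a ^ 3 + 27 * b ^ 2 ≠ 0) :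
    #(cubicRoots a b) ∈ ({0, 1, 3} : Finset ℕ) := by
  by_cases h : ∃ r ∈ cubicRoots a b, ∃ s ∈ cubicRoots a b, r ≠ s
  · obtain ⟨r, hr, s, hs, hrs⟩ := h
    rw [mem_cubicRoots] at hr hs
    obtain ⟨rfl, rfl⟩ := coeffs_eq_of_two_roots hrs hr hs
    rw [disc_of_two_roots, neg_ne_zero, pow_ne_zero_iff two_ne_zero] at hD
    have hroots : cubicRoots (-(r ^ 2 + r * s + s ^ 2)) (r * s * (r + s)) = {r, s, -(r + s)} := by
      ext x
      have hfac : x ^ 3 + -(r ^ 2 + r * s + s ^ 2) * x + r * s * (r + s)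
          = (x - r) * (x - s) * (x - -(r + s)) := by ring
      simp only [mem_cubicRoots, hfac, mul_eq_zero, sub_eq_zero, mem_insert, mem_singleton]
      tauto
    have hr : r ≠ -(r + s) := fun h => hD (by linear_combination (r - s) * (r + 2 * s) * h)
    have hs : s ≠ -(r + s) := fun h => hD (by linear_combination (r - s) * (2 * r + s) * h)
    rw [hroots, card_eq_three.mpr ⟨r, s, -(r + s), hrs, hr, hs, rfl⟩]
    simp
  · push Not at h
    have := card_le_one.mpr h
    simp only [mem_insert, mem_singleton]
    omega

variable (F) in
def nonsingularPairs : Finset (F × F) := {ab | 4 * ab.1 ^ 3 + 27 * ab.2 ^ 2 ≠ 0}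

variable (F) in
def cubicCount (n : ℕ) : ℕ := #{ab ∈ nonsingularPairs F | #(cubicRoots ab.1 ab.2) = n}

theorem card_nonsingularPairs_add (h2 : (2 : F) ≠ 0) (h3 : (3 : F) ≠ 0) :
    #(nonsingularPairs F) + Fintype.card F = Fintype.card F * Fintype.card F := by
  have hcusp : ({ab : F × F | 4 * ab.1 ^ 3 + 27 * ab.2 ^ 2 = 0} : Finset _)
      = univ.image fun t => (-(3 * t ^ 2), 2 * t ^ 3) := by
    ext ⟨a, b⟩
    simp only [mem_filter, mem_univ, true_and, mem_image, Prod.mk.injEq]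
    constructor
    · intro hD
      obtain ⟨t, rfl, rfl⟩ := exists_eq_of_disc_eq_zero h2 h3 hD
      exact ⟨t, rfl, rfl⟩
    · rintro ⟨t, rfl, rfl⟩
      ring
  have hinj : Function.Injective fun t : F => (-(3 * t ^ 2), 2 * t ^ 3) := fun t u htu => by
    simp only [Prod.mk.injEq, neg_inj, mul_right_inj' h3, mul_right_inj' h2] at htu
    have ht : ∀ t : F, t = t ^ 3 / t ^ 2 := fun t => by
      rcases eq_or_ne t 0 with rfl | ht
      · simp
      · field_simp
    rw [ht t, ht u, htu.1, htu.2]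
  have := card_filter_add_card_filter_not (s := (univ : Finset (F × F)))
    fun ab => 4 * ab.1 ^ 3 + 27 * ab.2 ^ 2 = 0
  rw [hcusp, card_image_of_injective _ hinj, card_univ, card_univ, Fintype.card_prod] at this
  simp only [nonsingularPairs, ne_eq]
  omega

theorem sum_comp_card_cubicRoots (g : ℕ → ℕ) :
    ∑ ab ∈ nonsingularPairs F, g #(cubicRoots ab.1 ab.2)
      = g 0 * cubicCount F 0 + g 1 * cubicCount F 1 + g 3 * cubicCount F 3 := by
  have hmaps : ∀ ab ∈ nonsingularPairs F, #(cubicRoots ab.1 ab.2) ∈ ({0, 1, 3} : Finset ℕ) :=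
    fun ab hab => card_cubicRoots_mem (mem_filter.mp hab).2
  rw [← sum_fiberwise_of_maps_to' hmaps]
  simp [cubicCount, mul_comm, add_assoc]


theorem sum_card_cubicRoots_add (h2 : (2 : F) ≠ 0) (h3 : (3 : F) ≠ 0) :
    ∑ ab ∈ nonsingularPairs F, #(cubicRoots ab.1 ab.2) + 2 * Fintype.card F + 1
      = Fintype.card F * Fintype.card F + 2 := by
  have hpairs : ∑ ab ∈ nonsingularPairs F, #(cubicRoots ab.1 ab.2)
      = #{x : F × F | x.2 ∉ ({-(3 * x.1 ^ 2), -(3 * x.1 ^ 2) / 4} : Finset F)} := by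
    rw [← card_sigma]
    refine card_nbij' (fun x => (x.2, x.1.1)) (fun x => ⟨(x.2, -(x.1 ^ 3) - x.2 * x.1), x.1⟩)
      ?_ ?_ ?_ fun _ _ => rfl
    · rintro ⟨⟨a, b⟩, r⟩ h
      simp only [mem_coe, mem_sigma, nonsingularPairs, mem_filter, mem_univ, true_and,
        mem_cubicRoots] at h ⊢
      obtain ⟨hD, hr⟩ := h
      obtain rfl : b = -(r ^ 3) - a * r := by linear_combination hr
      exact (disc_of_root_ne_zero_iff h2 a r).mp hD
    · rintro ⟨r, a⟩ h
      simp only [mem_coe, mem_sigma, nonsingularPairs, mem_filter, mem_univ, true_and,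
        mem_cubicRoots] at h ⊢
      exact ⟨(disc_of_root_ne_zero_iff h2 a r).mpr h, by ring⟩
    · rintro ⟨⟨a, b⟩, r⟩ h
      simp only [mem_coe, mem_sigma, mem_cubicRoots] at h
      simp only [Sigma.mk.injEq, Prod.mk.injEq, heq_eq_eq, true_and, and_true]
      linear_combination -h.2
  rw [hpairs]
  refine card_filter_notMem_of_card_eq (fun r => {-(3 * r ^ 2), -(3 * r ^ 2) / 4}) 0 (by simp)
    fun r hr => card_pair fun h => ?_
  have h4 : (4 : F) ≠ 0 := by simpa [show (4 : F) = 2 ^ 2 by norm_num] using h2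
  rw [eq_div_iff h4] at h
  have : 3 * 3 * r ^ 2 = 0 := by linear_combination -h
  simp [h3, hr] at this

theorem sum_card_offDiag_cubicRoots_add (h2 : (2 : F) ≠ 0) (h3 : (3 : F) ≠ 0) :
    ∑ ab ∈ nonsingularPairs F, #(cubicRoots ab.1 ab.2).offDiag + 3 * Fintype.card F + 1
      = Fintype.card F * Fintype.card F + 3 := by
  have hpairs : ∑ ab ∈ nonsingularPairs F, #(cubicRoots ab.1 ab.2).offDiag
      = #{x : F × F | x.2 ∉ ({x.1, -(x.1 / 2), -(2 * x.1)} : Finset F)} := by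
    rw [← card_sigma]
    refine card_nbij' (fun x => x.2)
      (fun x => ⟨(-(x.1 ^ 2 + x.1 * x.2 + x.2 ^ 2), x.1 * x.2 * (x.1 + x.2)), x⟩)
      ?_ ?_ ?_ fun _ _ => rfl
    · rintro ⟨⟨a, b⟩, r, s⟩ h
      simp only [mem_coe, mem_sigma, nonsingularPairs, mem_filter, mem_univ, true_and,
        mem_offDiag, mem_cubicRoots] at h ⊢
      obtain ⟨hD, hr, hs, hrs⟩ := h
      obtain ⟨rfl, rfl⟩ := coeffs_eq_of_two_roots hrs hr hs
      exact (disc_of_two_roots_ne_zero_iff h2 r s).mp hD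
    · rintro ⟨r, s⟩ h
      simp only [mem_coe, mem_sigma, nonsingularPairs, mem_filter, mem_univ, true_and,
        mem_offDiag, mem_cubicRoots] at h ⊢
      refine ⟨(disc_of_two_roots_ne_zero_iff h2 r s).mpr h, by ring, by ring, ?_⟩
      rintro rfl
      simp at h
    · rintro ⟨⟨a, b⟩, r, s⟩ h
      simp only [mem_coe, mem_sigma, mem_offDiag, mem_cubicRoots] at h
      obtain ⟨ha, hb⟩ := coeffs_eq_of_two_roots h.2.2.2 h.2.1 h.2.2.1
      simp [ha, hb]
  rw [hpairs]
  refine card_filter_notMem_of_card_eq (fun r => {r, -(r / 2), -(2 * r)}) 0 (by simp)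
    fun r hr => card_eq_three.mpr ⟨r, -(r / 2), -(2 * r), ?_, ?_, ?_, rfl⟩
  all_goals
    intro h
    field_simp at h
    exact h3 (by linear_combination h)

theorem cubicCount_zero_add_one_add_three (h2 : (2 : F) ≠ 0) (h3 : (3 : F) ≠ 0) :
    cubicCount F 0 + cubicCount F 1 + cubicCount F 3 + Fintype.card F
      = Fintype.card F * Fintype.card F := by
  have := sum_comp_card_cubicRoots (F := F) fun _ => 1
  simp only [sum_const, smul_eq_mul, one_mul, mul_one] at this
  rw [← this, card_nonsingularPairs_add h2 h3]

theorem cubicCount_one_add_three_mul (h2 : (2 : F) ≠ 0) (h3 : (3 : F) ≠ 0) :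
    cubicCount F 1 + 3 * cubicCount F 3 + 2 * Fintype.card F + 1
      = Fintype.card F * Fintype.card F + 2 := by
  have := sum_comp_card_cubicRoots (F := F) id
  simp only [id, zero_mul, zero_add, one_mul] at this
  rw [← this, sum_card_cubicRoots_add h2 h3]

theorem six_mul_cubicCount_three (h2 : (2 : F) ≠ 0) (h3 : (3 : F) ≠ 0) :
    6 * cubicCount F 3 + 3 * Fintype.card F + 1 = Fintype.card F * Fintype.card F + 3 := by
  have := sum_comp_card_cubicRoots (F := F) fun n => n * n - n
  simp only [← offDiag_card] at this
  have := sum_card_offDiag_cubicRoots_add h2 h3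
  omega

theorem cubicCount_eq (h2 : (2 : F) ≠ 0) (h3 : (3 : F) ≠ 0) :
    (cubicCount F 0 : ℚ) = ((Fintype.card F : ℚ) ^ 2 - 1) / 3 ∧
    (cubicCount F 1 : ℚ) = (Fintype.card F : ℚ) * ((Fintype.card F : ℚ) - 1) / 2 ∧
    (cubicCount F 3 : ℚ) = ((Fintype.card F : ℚ) - 1) * ((Fintype.card F : ℚ) - 2) / 6 := by
  have e0 := cubicCount_zero_add_one_add_three h2 h3
  have e1 := cubicCount_one_add_three_mul h2 h3
  have e3 := six_mul_cubicCount_three h2 h3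
  qify at e0 e1 e3
  exact ⟨by linear_combination e0 - e1 + e3 / 3, by linear_combination e1 - e3 / 2,
    by linear_combination e3 / 6⟩

end Cubic

theorem cubicPairCount_eq_cubicCount {p : ℕ} [Fact p.Prime] (h2 : (2 : ZMod p) ≠ 0)
    (h3 : (3 : ZMod p) ≠ 0) (n : ℕ) : cubicPairCount p n = cubicCount (ZMod p) n := by
  have hroots : ∀ a b : ZMod p, {x : ZMod p | x ^ 3 + a * x + b = 0} = cubicRoots a b := by
    intro a b; ext; simp
  rw [cubicPairCount, cubicCount, ← Set.ncard_coe_finset]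
  congr 1
  ext ⟨a, b⟩
  simp [separable_cubic_iff h2 h3, hroots, nonsingularPairs]

/-- For a prime `p ≥ 5`, the number of pairs `(a,b) ∈ F_p²` with `T³ + aT + b` separable having
exactly `n` roots in `F_p` is `(p²-1)/3` for `n = 0`, `p(p-1)/2` for `n = 1`, and
`(p-1)(p-2)/6` for `n = 3`. -/
theorem cubicPairCount_eq (p : ℕ) [Fact p.Prime] (hp : 5 ≤ p) :
    (cubicPairCount p 0 : ℚ) = ((p : ℚ) ^ 2 - 1) / 3 ∧
    (cubicPairCount p 1 : ℚ) = (p : ℚ) * ((p : ℚ) - 1) / 2 ∧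
    (cubicPairCount p 3 : ℚ) = ((p : ℚ) - 1) * ((p : ℚ) - 2) / 6 := by
  have hsmall : ∀ n : ℕ, 0 < n → n < p → (n : ZMod p) ≠ 0 := fun n h0 hn =>
    (ZMod.natCast_eq_zero_iff n p).not.mpr (Nat.not_dvd_of_pos_of_lt h0 hn)
  have h2 : (2 : ZMod p) ≠ 0 := by exact_mod_cast hsmall 2 two_pos (by omega)
  have h3 : (3 : ZMod p) ≠ 0 := by exact_mod_cast hsmall 3 three_pos (by omega)
  simp only [cubicPairCount_eq_cubicCount h2 h3]
  simpa [ZMod.card] using cubicCount_eq h2 h3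

end
end

section
/- Let p \ge 5 be a prime, n \ge 1 an integer, B a unit of \mathbb{Z}/p^{n+1}\mathbb{Z}, and u \in F_p^\times. Then the number of units A \in (\mathbb{Z}/p^{n+1}\mathbb{Z})^\times such that 4A^3 + 27B^2 = \tilde{u}\,p^n in \mathbb{Z}/p^{n+1}\mathbb{Z} (where \tilde{u} is any lift of u to \mathbb{Z}/p^{n+1}\mathbb{Z}; the condition is independent of the lift) equals #\{\zeta \in F_p : \zeta^3 = 1\} if (B \bmod p)^2 \in 4\,(F_p^\times)^3, and equals 0 otherwise. -/
/-!
Since `4` is a unit, the equation says `A³ = c` for the unit `c = (ũ pⁿ - 27 B²) / 4`, whose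
reduction mod `p` is `-27 B̄² / 4`. Reduction `(ℤ/p^{n+1})ˣ → F_pˣ` is
surjective with kernel of order `pⁿ`, prime to `3`, so cubing is bijective on the kernel and the cube
roots of `c` correspond bijectively to the cube roots of `c̄` in `F_pˣ`. These form a coset of the
cube roots of unity when `c̄` is a cube, and `c̄ = y³` exactly when `B̄² = 4 (-y/3)³`.
-/

namespace Subgroup

variable {G : Type*} [Group G] (K : Subgroup G) {k : ℕ}

theorem exists_pow_eq_of_coprime (hk : (Nat.card K).Coprime k) {y : G} (hy : y ∈ K) :
    ∃ r ∈ K, r ^ k = y := by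
  obtain ⟨r, hr⟩ := (powCoprime hk).surjective ⟨y, hy⟩
  exact ⟨r, r.2, congrArg Subtype.val hr⟩

theorem eq_one_of_pow_eq_one_of_coprime (hk : (Nat.card K).Coprime k) {x : G} (hx : x ∈ K)
    (hxk : x ^ k = 1) : x = 1 :=
  congrArg Subtype.val <| (powCoprime hk).injective (a₁ := ⟨x, hx⟩) (a₂ := 1)
    (Subtype.ext (hxk.trans (one_pow k).symm))

end Subgroup

namespace MonoidHom

theorem card_ker_mul_card_of_surjective {G H : Type*} [Group G] [Group H] {f : G →* H}
    (hf : Function.Surjective f) : Nat.card f.ker * Nat.card H = Nat.card G := by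
  rw [← f.ker.card_mul_index, Subgroup.index_ker, range_eq_top.2 hf, Subgroup.card_top]

variable {G H : Type*} [CommGroup G] [Group H] {f : G →* H} {k : ℕ}

theorem bijOn_setOf_pow_eq (hf : Function.Surjective f) (hk : (Nat.card f.ker).Coprime k)
    (c : G) : Set.BijOn f {x | x ^ k = c} {y | y ^ k = f c} := by
  refine ⟨fun x hx => by simp_all [← map_pow], fun x hx x' hx' hxx' => ?_, fun y hy => ?_⟩
  · have hmem : x / x' ∈ f.ker := by simp [mem_ker, map_div, hxx']
    have hpow : (x / x') ^ k = 1 := by simp_all [div_pow]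
    exact div_eq_one.1 (f.ker.eq_one_of_pow_eq_one_of_coprime hk hmem hpow)
  · obtain ⟨s, rfl⟩ := hf y
    have hmem : c / s ^ k ∈ f.ker := by simp_all [mem_ker, map_div, map_pow]
    obtain ⟨r, hr, hrk⟩ := f.ker.exists_pow_eq_of_coprime hk hmem
    refine ⟨s * r, ?_, ?_⟩
    · simp [mul_pow, hrk]
    · simp [mem_ker.1 hr]

theorem ncard_setOf_pow_eq (hf : Function.Surjective f) (hk : (Nat.card f.ker).Coprime k)
    (c : G) : {x | x ^ k = c}.ncard = {y | y ^ k = f c}.ncard :=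
  (bijOn_setOf_pow_eq hf hk c).ncard_eq

end MonoidHom

theorem ncard_setOf_pow_eq_pow {G : Type*} [CommGroup G] (k : ℕ) (g : G) :
    {x : G | x ^ k = g ^ k}.ncard = {x : G | x ^ k = 1}.ncard := by
  refine Set.BijOn.ncard_eq (f := (g⁻¹ * ·)) ⟨?_, (mul_right_injective _).injOn, ?_⟩
  · intro x hx
    simp_all [mul_pow]
  · intro x hx
    exact ⟨g * x, by simp_all [mul_pow], by simp⟩

theorem Units.ncard_setOf_pow_eq_one {M : Type*} [Monoid M] {k : ℕ} (hk : k ≠ 0) :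
    {x : Mˣ | x ^ k = 1}.ncard = {x : M | x ^ k = 1}.ncard := by
  refine Set.BijOn.ncard_eq (f := Units.val) ⟨?_, Units.val_injective.injOn, ?_⟩
  · intro x hx
    simp_all [← Units.val_pow_eq_pow_val]
  · intro x hx
    exact ⟨Units.ofPowEqOne x k hx hk, Units.pow_ofPowEqOne hx hk, rfl⟩

theorem setOf_mul_pow_add_eq {R : Type*} [Ring R] {a b x : R} (ha : IsUnit a) {k : ℕ} {c : Rˣ}
    (hc : a * c = x - b) : {A : Rˣ | a * (A : R) ^ k + b = x} = {A | A ^ k = c} := by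
  ext A
  rw [Set.mem_ofPred_eq, Set.mem_ofPred_eq, ← eq_sub_iff_add_eq, ← hc, ha.mul_right_inj,
    Units.ext_iff, Units.val_pow_eq_pow_val]

theorem exists_sq_eq_four_mul_cube_iff {F : Type*} [Field F] (h2 : (2 : F) ≠ 0)
    (h3 : (3 : F) ≠ 0) {b w : F} (hw : 4 * w = -27 * b ^ 2) :
    (∃ t : Fˣ, b ^ 2 = 4 * (t : F) ^ 3) ↔ ∃ y : Fˣ, (y : F) ^ 3 = w := by
  constructor
  · rintro ⟨t, ht⟩
    refine ⟨Units.mk0 (-3 * t) (by simp [h3]), mul_left_cancel₀ (mul_ne_zero h2 h2) ?_⟩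
    simp only [Units.val_mk0]
    linear_combination -hw + 27 * ht
  · rintro ⟨y, rfl⟩
    refine ⟨Units.mk0 (-y / 3) (by simp [h3]), ?_⟩
    simp only [Units.val_mk0]
    field_simp
    linear_combination hw

namespace ZMod

theorem natCast_ne_zero_of_lt {p m : ℕ} (h0 : 0 < m) (hm : m < p) : (m : ZMod p) ≠ 0 :=
  fun h => (Nat.le_of_dvd h0 ((natCast_eq_zero_iff m p).1 h)).not_gt hm

variable {p : ℕ} [Fact p.Prime]

theorem isUnit_of_castHom_ne_zero {k : ℕ} (h : p ∣ p ^ k) {x : ZMod (p ^ k)}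
    (hx : castHom h (ZMod p) x ≠ 0) : IsUnit x := by
  have : NeZero (p ^ k) := ⟨pow_ne_zero _ (Fact.out : p.Prime).ne_zero⟩
  obtain ⟨m, rfl⟩ := natCast_zmod_surjective x
  rw [isUnit_iff_coprime]
  refine .pow_right _ (Nat.Coprime.symm <| (Nat.Prime.coprime_iff_not_dvd Fact.out).2
    fun hdvd => hx ?_)
  rwa [map_natCast, natCast_eq_zero_iff]

theorem card_ker_unitsMap_prime_pow (n : ℕ) :
    Nat.card (unitsMap (dvd_pow_self p (Nat.succ_ne_zero n))).ker = p ^ n := by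
  have hp : p.Prime := Fact.out
  have := (unitsMap (dvd_pow_self p (Nat.succ_ne_zero n))).card_ker_mul_card_of_surjective
    (unitsMap_surjective _)
  rw [Nat.card_eq_fintype_card (α := (ZMod _)ˣ), Nat.card_eq_fintype_card (α := (ZMod _)ˣ),
    card_units_eq_totient, card_units_eq_totient, Nat.totient_prime hp,
    Nat.totient_prime_pow_succ hp] at this
  exact Nat.eq_of_mul_eq_mul_right (by have := hp.two_le; omega) this

end ZMod

/-- Hensel-type count: for a prime `p ≥ 5`, `n ≥ 1`, a unit `B` of `ℤ/p^{n+1}ℤ` and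
`u ∈ F_p^×`, the number of units `A ∈ (ℤ/p^{n+1}ℤ)^×` with `4A³ + 27B² = ũ p^n` equals the
number of cube roots of unity in `F_p` when `B̄² ∈ 4(F_p^×)³`, and `0` otherwise. -/
theorem count_units_with_discriminant_valuation (p : ℕ) [Fact p.Prime] (hp : 5 ≤ p)
    (n : ℕ) (hn : 1 ≤ n) (B : (ZMod (p ^ (n + 1)))ˣ) (u : (ZMod p)ˣ) :
    ((∃ t : (ZMod p)ˣ,
        (ZMod.castHom (dvd_pow_self p (Nat.succ_ne_zero n)) (ZMod p) (B : ZMod (p ^ (n + 1)))) ^ 2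
          = 4 * (t : ZMod p) ^ 3) →
      Set.ncard {A : (ZMod (p ^ (n + 1)))ˣ |
          4 * (A : ZMod (p ^ (n + 1))) ^ 3 + 27 * (B : ZMod (p ^ (n + 1))) ^ 2
            = (((u : ZMod p).val : ZMod (p ^ (n + 1)))) * (p : ZMod (p ^ (n + 1))) ^ n}
        = Set.ncard {ζ : ZMod p | ζ ^ 3 = 1}) ∧
    ((¬ ∃ t : (ZMod p)ˣ,
        (ZMod.castHom (dvd_pow_self p (Nat.succ_ne_zero n)) (ZMod p) (B : ZMod (p ^ (n + 1)))) ^ 2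
          = 4 * (t : ZMod p) ^ 3) →
      Set.ncard {A : (ZMod (p ^ (n + 1)))ˣ |
          4 * (A : ZMod (p ^ (n + 1))) ^ 3 + 27 * (B : ZMod (p ^ (n + 1))) ^ 2
            = (((u : ZMod p).val : ZMod (p ^ (n + 1)))) * (p : ZMod (p ^ (n + 1))) ^ n}
        = 0) := by
  set R := ZMod (p ^ (n + 1))
  have hdvd : p ∣ p ^ (n + 1) := dvd_pow_self p (Nat.succ_ne_zero n)
  set φ : R →+* ZMod p := ZMod.castHom hdvd (ZMod p)
  set π : Rˣ →* (ZMod p)ˣ := ZMod.unitsMap hdvd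
  set x₀ : R := ((u : ZMod p).val : R) * (p : R) ^ n
  have h2 : (2 : ZMod p) ≠ 0 := by exact_mod_cast ZMod.natCast_ne_zero_of_lt two_pos (by omega)
  have h3 : (3 : ZMod p) ≠ 0 := by exact_mod_cast ZMod.natCast_ne_zero_of_lt three_pos (by omega)
  have hφ : φ (x₀ - 27 * (B : R) ^ 2) = -27 * φ B ^ 2 := by
    rw [map_sub, map_mul, map_pow, map_natCast φ p, ZMod.natCast_self, zero_pow (by omega),
      mul_zero, zero_sub, map_mul, map_pow, map_ofNat, neg_mul]
  have h4 : IsUnit (4 : R) := ZMod.isUnit_of_castHom_ne_zero hdvd (by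
    rw [map_ofNat, show (4 : ZMod p) = 2 * 2 by norm_num]; exact mul_ne_zero h2 h2)
  obtain ⟨x, hx⟩ := ZMod.isUnit_of_castHom_ne_zero hdvd (x := x₀ - 27 * (B : R) ^ 2) (by
    rw [hφ, show (-27 : ZMod p) = -3 ^ 3 by norm_num]
    exact mul_ne_zero (neg_ne_zero.2 (pow_ne_zero 3 h3)) (pow_ne_zero 2 (π B).ne_zero))
  set c := h4.unit⁻¹ * x
  have hc : 4 * (c : R) = x₀ - 27 * (B : R) ^ 2 := by
    rw [Units.val_mul, ← mul_assoc, h4.mul_val_inv, one_mul, hx]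
  have hπc : 4 * (π c : ZMod p) = -27 * φ B ^ 2 := by
    have := congrArg φ hc
    rwa [map_mul, map_ofNat, hφ] at this
  have hker : (Nat.card π.ker).Coprime 3 := by
    rw [ZMod.card_ker_unitsMap_prime_pow]
    exact .pow_left n ((Nat.coprime_primes Fact.out Nat.prime_three).2 (by omega))
  rw [setOf_mul_pow_add_eq h4 hc, π.ncard_setOf_pow_eq (ZMod.unitsMap_surjective _) hker,
    exists_sq_eq_four_mul_cube_iff h2 h3 hπc]
  refine ⟨fun ⟨y, hy⟩ => ?_, fun hno => ?_⟩
  · rw [show π c = y ^ 3 from Units.ext (by rw [Units.val_pow_eq_pow_val, hy]),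
      ncard_setOf_pow_eq_pow, Units.ncard_setOf_pow_eq_one three_ne_zero]
  · rw [Set.ncard_eq_zero]
    exact Set.eq_empty_iff_forall_notMem.2 fun y hy =>
      hno ⟨y, by rw [← Units.val_pow_eq_pow_val, hy]⟩
end

section
/- Let \alpha be a nonnegative rational number and let f : \mathbb{Z}_{>0} \to \mathbb{R} be the multiplicative function defined on prime powers by f(p^r) = 1 - p^{-4} if r \ge 6 and f(p^r) = 1 if 1 \le r \le 5 (and f(1) = 1). Then there is a constant C > 0, depending only on \alpha, such that for every real Y \ge 1, |\sum_{1 \le B \le Y} B^{\alpha} f(B) - \zeta(10)^{-1} Y^{\alpha+1}/(\alpha+1)| \le C\,Y^{\alpha}, where the sum is over positive integers B \le Y. -/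
/-!
Write `f = g * 1` (Dirichlet convolution) with `g` supported on sixth powers,
`g (k ^ 6) = μ k / k ^ 4`: both sides are multiplicative and agree on prime powers. Hence
`∑_{B ≤ Y} B^α f(B) = ∑_k μ(k) k^{-4} (k^6)^α ∑_{j ≤ Y / k^6} j^α`, and comparison with an integral
gives `∑_{j ≤ X} j^α = X^{α+1}/(α+1) + O(X^α)` uniformly in `X ≥ 0`. The main terms add up to
`Y^{α+1}/(α+1) · ∑_k μ(k)/k^{10} = ζ(10)⁻¹ Y^{α+1}/(α+1)`, the errors to at most `ζ(4) Y^α`.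
-/

open Finset Real
open scoped ArithmeticFunction.Moebius ArithmeticFunction.zeta

theorem sum_Ioc_rpow_bounds {a : ℝ} (ha : 0 ≤ a) (N : ℕ) :
    (N : ℝ) ^ (a + 1) / (a + 1) ≤ ∑ k ∈ Ioc 0 N, (k : ℝ) ^ a ∧
      ∑ k ∈ Ioc 0 N, (k : ℝ) ^ a ≤ (N : ℝ) ^ (a + 1) / (a + 1) + (N : ℝ) ^ a := by
  have hmono : MonotoneOn (fun t : ℝ => t ^ a) (Set.Icc ((0 : ℕ) : ℝ) N) :=
    fun x hx y _ hxy => rpow_le_rpow (by simpa using hx.1) hxy ha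
  have hint : ∫ t in ((0 : ℕ) : ℝ)..N, t ^ a = (N : ℝ) ^ (a + 1) / (a + 1) := by
    rw [integral_rpow (Or.inl (by linarith))]
    simp [zero_rpow (by linarith : a + 1 ≠ 0)]
  constructor
  · have h := hmono.integral_le_sum_Ico (Nat.zero_le N)
    rwa [hint, sum_Ico_add' (fun k : ℕ => (k : ℝ) ^ a), Ico_add_one_add_one_eq_Ioc] at h
  · have h := hmono.sum_le_integral_Ico (Nat.zero_le N)
    have hsplit := (sum_Ioc_add_eq_sum_Icc (f := fun k : ℕ => (k : ℝ) ^ a) (Nat.zero_le N)).trans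
      (sum_Ico_add_eq_sum_Icc (Nat.zero_le N)).symm
    rw [hint] at h
    have h0 : (0 : ℝ) ≤ ((0 : ℕ) : ℝ) ^ a := rpow_nonneg (Nat.cast_nonneg 0) a
    linarith

theorem rpow_add_one_div_sub_le {a : ℝ} (ha : 0 ≤ a) {x y : ℝ} (hx : 0 ≤ x) (hxy : x ≤ y) :
    y ^ (a + 1) / (a + 1) - x ^ (a + 1) / (a + 1) ≤ (y - x) * y ^ a := by
  have hmono : ∫ t in x..y, t ^ a ≤ ∫ t in x..y, y ^ a :=
    intervalIntegral.integral_mono_on hxy (intervalIntegral.intervalIntegrable_rpow' (by linarith))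
      intervalIntegrable_const fun t ht => rpow_le_rpow (hx.trans ht.1) ht.2 ha
  rwa [integral_rpow (Or.inl (by linarith)), intervalIntegral.integral_const, smul_eq_mul,
    sub_div] at hmono

theorem abs_sum_Ioc_floor_rpow_sub_le {a : ℝ} (ha : 0 ≤ a) {X : ℝ} (hX : 0 ≤ X) :
    |∑ k ∈ Ioc 0 ⌊X⌋₊, (k : ℝ) ^ a - X ^ (a + 1) / (a + 1)| ≤ X ^ a := by
  set N := ⌊X⌋₊
  have hNX : (N : ℝ) ≤ X := Nat.floor_le hX
  have hXN : X - N ≤ 1 := by linarith [Nat.lt_floor_add_one X]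
  obtain ⟨hlow, hup⟩ := sum_Ioc_rpow_bounds ha N
  have hgap := rpow_add_one_div_sub_le ha (Nat.cast_nonneg N) hNX
  have hgap' : (X - N) * X ^ a ≤ X ^ a := by
    nlinarith [rpow_nonneg hX a, sub_nonneg.2 hNX]
  have hpow : (N : ℝ) ^ (a + 1) / (a + 1) ≤ X ^ (a + 1) / (a + 1) := by
    gcongr
  have hNa : (N : ℝ) ^ a ≤ X ^ a := rpow_le_rpow (Nat.cast_nonneg N) hNX ha
  rw [abs_le]
  constructor <;> linarith

theorem abs_rpow_mul_sum_Ioc_div_sub_le {a : ℝ} (ha : 0 ≤ a) {Y : ℝ} (hY : 0 ≤ Y) (d : ℕ) :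
    |(d : ℝ) ^ a * ∑ k ∈ Ioc 0 (⌊Y⌋₊ / d), (k : ℝ) ^ a - Y ^ (a + 1) / ((a + 1) * d)| ≤ Y ^ a := by
  rcases eq_or_ne d 0 with rfl | hd
  · simpa using rpow_nonneg hY a
  have hd' : (0 : ℝ) < d := by positivity
  have hda : (0 : ℝ) < (d : ℝ) ^ a := rpow_pos_of_pos hd' a
  have h := abs_sum_Ioc_floor_rpow_sub_le ha (div_nonneg hY hd'.le)
  rw [Nat.floor_div_natCast] at h
  have hscale : (d : ℝ) ^ a * ((Y / d) ^ (a + 1) / (a + 1)) = Y ^ (a + 1) / ((a + 1) * d) := by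
    rw [div_rpow hY hd'.le, rpow_add hd', rpow_one]
    field_simp
  calc _ = (d : ℝ) ^ a * |∑ k ∈ Ioc 0 (⌊Y⌋₊ / d), (k : ℝ) ^ a - (Y / d) ^ (a + 1) / (a + 1)| := by
        rw [← hscale, ← mul_sub, abs_mul, abs_of_pos hda]
    _ ≤ (d : ℝ) ^ a * (Y / d) ^ a := by gcongr
    _ = Y ^ a := by rw [div_rpow hY hd'.le]; field_simp

theorem Nat.Coprime.exists_pow_eq_left {r m n c : ℕ} (hmn : m.Coprime n) (hc : c ^ r = m * n) :
    ∃ a, a ^ r = m :=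
  (exists_eq_pow_of_mul_eq_pow (Nat.isUnit_iff.2 hmn) hc.symm).imp fun _ h => h.symm

namespace ArithmeticFunction

section Expand

variable {R : Type*} [CommSemiring R]

/-- The analogue of `Polynomial.expand`: the L-series of `expand r h` at `s` is that of `h` at
`r * s`. -/
def expand (r : ℕ) (h : ArithmeticFunction R) : ArithmeticFunction R :=
  ⟨fun n => ∑ k ∈ n.divisors with k ^ r = n, h k, by simp⟩

variable {r : ℕ} {h : ArithmeticFunction R}

theorem expand_apply (n : ℕ) : expand r h n = ∑ k ∈ n.divisors with k ^ r = n, h k := rfl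

theorem expand_apply_pow (hr : r ≠ 0) (k : ℕ) : expand r h (k ^ r) = h k := by
  rcases eq_or_ne k 0 with rfl | hk
  · simp [expand, zero_pow hr]
  have : {j ∈ (k ^ r).divisors | j ^ r = k ^ r} = {k} := by
    ext j
    simp only [mem_filter, Nat.mem_divisors, mem_singleton]
    constructor
    · exact fun ⟨_, hj⟩ => Nat.pow_left_injective hr hj
    · rintro rfl
      exact ⟨⟨dvd_pow_self _ hr, pow_ne_zero r hk⟩, rfl⟩
  simp [expand, this]

theorem expand_apply_of_forall_pow_ne {n : ℕ} (hn : ∀ k, k ^ r ≠ n) : expand r h n = 0 :=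
  (expand_apply n).trans <| sum_eq_zero fun k hk => absurd (mem_filter.1 hk).2 (hn k)

theorem IsMultiplicative.expand (hh : h.IsMultiplicative) (hr : r ≠ 0) :
    (expand r h).IsMultiplicative := by
  refine ⟨by simpa [hh.map_one] using expand_apply_pow (h := h) hr 1, fun {m n} hmn => ?_⟩
  by_cases hm : ∃ a, a ^ r = m
  · by_cases hn : ∃ b, b ^ r = n
    · obtain ⟨a, rfl⟩ := hm
      obtain ⟨b, rfl⟩ := hn
      have hab : a.Coprime b := by
        simpa [Nat.coprime_pow_left_iff (Nat.pos_of_ne_zero hr),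
          Nat.coprime_pow_right_iff (Nat.pos_of_ne_zero hr)] using hmn
      rw [← mul_pow, expand_apply_pow hr, expand_apply_pow hr, expand_apply_pow hr,
        hh.map_mul_of_coprime hab]
    · push Not at hn
      rw [expand_apply_of_forall_pow_ne hn, mul_zero, expand_apply_of_forall_pow_ne]
      exact fun c hc => hn _ (hmn.symm.exists_pow_eq_left (hc.trans (mul_comm m n))).choose_spec
  · push Not at hm
    rw [expand_apply_of_forall_pow_ne hm, zero_mul, expand_apply_of_forall_pow_ne]
    exact fun c hc => hm _ (hmn.exists_pow_eq_left hc).choose_spec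

theorem expand_apply_prime_pow (hr : r ≠ 0) {p : ℕ} (hp : p.Prime) (j : ℕ) :
    expand r h (p ^ j) = if r ∣ j then h (p ^ (j / r)) else 0 := by
  split_ifs with hrj
  · obtain ⟨m, rfl⟩ := hrj
    rw [mul_comm, pow_mul, expand_apply_pow hr, Nat.mul_div_cancel _ (Nat.pos_of_ne_zero hr)]
  · refine expand_apply_of_forall_pow_ne fun k hk => hrj ?_
    obtain ⟨m, -, rfl⟩ := (Nat.dvd_prime_pow hp).1 (hk ▸ dvd_pow_self k hr)
    rw [← pow_mul] at hk
    exact ⟨m, by rw [mul_comm]; exact Nat.pow_right_injective hp.two_le hk.symm⟩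

theorem tsum_expand_mul [TopologicalSpace R] (hr : r ≠ 0) (u : ℕ → R) :
    ∑' n, expand r h n * u n = ∑' k, h k * u (k ^ r) := by
  rw [← (Nat.pow_left_injective hr).tsum_eq]
  · simp only [expand_apply_pow hr]
  · intro n hn
    by_contra hnr
    exact hn <| show expand r h n * u n = 0 by
      rw [expand_apply_of_forall_pow_ne fun k hk => hnr ⟨k, hk⟩, zero_mul]

end Expand

theorem sum_Ioc_rpow_mul_mul_zeta (g : ArithmeticFunction ℝ) (a : ℝ) (N : ℕ) :
    ∑ n ∈ Ioc 0 N, (n : ℝ) ^ a * (g * ζ) n =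
      ∑ d ∈ Ioc 0 N, g d * ((d : ℝ) ^ a * ∑ k ∈ Ioc 0 (N / d), (k : ℝ) ^ a) := by
  let w : ArithmeticFunction ℝ := ⟨fun n => if n = 0 then 0 else (n : ℝ) ^ a, if_pos rfl⟩
  have hw {n : ℕ} (hn : n ≠ 0) : w n = (n : ℝ) ^ a := if_neg hn
  have hweight {n : ℕ} (hn : n ≠ 0) :
      (g.pmul w * (ζ : ArithmeticFunction ℝ).pmul w) n = (n : ℝ) ^ a * (g * ζ) n := by
    simp only [mul_apply, pmul_apply, mul_sum]
    refine sum_congr rfl fun x hx => ?_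
    obtain ⟨hx, -⟩ := Nat.mem_divisorsAntidiagonal.1 hx
    have h1 : x.1 ≠ 0 := left_ne_zero_of_mul (hx ▸ hn)
    have h2 : x.2 ≠ 0 := right_ne_zero_of_mul (hx ▸ hn)
    rw [hw h1, hw h2, ← hx, Nat.cast_mul, Real.mul_rpow (Nat.cast_nonneg _) (Nat.cast_nonneg _)]
    ring
  rw [← sum_congr rfl fun n hn => hweight (mem_Ioc.1 hn).1.ne', sum_Ioc_mul_eq_sum_sum]
  refine sum_congr rfl fun d hd => ?_
  rw [pmul_apply, hw (mem_Ioc.1 hd).1.ne', mul_assoc]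
  congr 2
  refine sum_congr rfl fun k hk => ?_
  rw [pmul_apply, hw (mem_Ioc.1 hk).1.ne', natCoe_apply, zeta_apply_ne (mem_Ioc.1 hk).1.ne',
    Nat.cast_one, one_mul]

noncomputable def moebiusDivPow (s : ℕ) : ArithmeticFunction ℝ :=
  pdiv (μ : ArithmeticFunction ℝ) (pow s : ArithmeticFunction ℕ)

theorem isMultiplicative_moebiusDivPow (s : ℕ) : (moebiusDivPow s).IsMultiplicative :=
  isMultiplicative_moebius.intCast.pdiv isMultiplicative_pow.natCast

theorem moebiusDivPow_apply {s : ℕ} (hs : s ≠ 0) (k : ℕ) :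
    moebiusDivPow s k = μ k / (k : ℝ) ^ s := by
  simp [moebiusDivPow, pow_apply, hs]

theorem moebiusDivPow_apply_prime_pow (s : ℕ) {p : ℕ} (hp : p.Prime) (m : ℕ) :
    moebiusDivPow s (p ^ m) = if m = 0 then 1 else if m = 1 then -((p : ℝ) ^ s)⁻¹ else 0 := by
  rcases Nat.lt_or_ge m 2 with hm | hm
  · interval_cases m
    · simp [moebiusDivPow]
    · simp [moebiusDivPow, moebius_apply_prime hp, pow_apply, neg_div, hp.ne_zero]
  · simp [moebiusDivPow, moebius_apply_prime_pow hp (by omega : m ≠ 0), show m ≠ 0 by omega,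
      show m ≠ 1 by omega]

theorem expand_moebiusDivPow_mul_zeta_apply_prime_pow {r : ℕ} (hr : r ≠ 0) (s : ℕ) {p : ℕ}
    (hp : p.Prime) (i : ℕ) :
    (expand r (moebiusDivPow s) * ζ) (p ^ i) = if r ≤ i then 1 - ((p : ℝ) ^ s)⁻¹ else 1 := by
  have hterm (j : ℕ) : expand r (moebiusDivPow s) (p ^ j) =
      (if j = 0 then 1 else 0) + if j = r then -((p : ℝ) ^ s)⁻¹ else 0 := by
    rw [expand_apply_prime_pow hr hp, moebiusDivPow_apply_prime_pow s hp]
    by_cases hrj : r ∣ j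
    · obtain ⟨m, rfl⟩ := hrj
      rw [if_pos (dvd_mul_right r m), Nat.mul_div_cancel_left _ (Nat.pos_of_ne_zero hr)]
      rcases m with _ | _ | m
      · simp [hr.symm]
      · simp [hr]
      · simp [hr]
    · rw [if_neg hrj, if_neg (fun h : j = 0 => hrj (h ▸ dvd_zero r)),
        if_neg (fun h : j = r => hrj (h ▸ dvd_rfl)), add_zero]
  rw [coe_mul_zeta_apply, Nat.sum_divisors_prime_pow hp, sum_congr rfl fun j _ => hterm j,
    sum_add_distrib, sum_ite_eq', sum_ite_eq']
  simp only [mem_range]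
  split_ifs <;> first | (exfalso; omega) | ring

theorem eq_expand_moebiusDivPow_mul_zeta_apply {r s : ℕ} (hr : r ≠ 0) {f : ℕ → ℝ}
    (hf1 : f 1 = 1) (hfmul : ∀ m n : ℕ, Nat.Coprime m n → f (m * n) = f m * f n)
    (hfpp : ∀ p i : ℕ, p.Prime → 1 ≤ i → f (p ^ i) = if r ≤ i then 1 - ((p : ℝ) ^ s)⁻¹ else 1)
    {n : ℕ} (hn : n ≠ 0) :
    f n = (expand r (moebiusDivPow s) * ζ) n := by
  let F : ArithmeticFunction ℝ := ⟨fun n => if n = 0 then 0 else f n, if_pos rfl⟩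
  have hF {n : ℕ} (hn : n ≠ 0) : F n = f n := if_neg hn
  have hFmul : F.IsMultiplicative := IsMultiplicative.iff_ne_zero.2
    ⟨(hF one_ne_zero).trans hf1, fun hm hn hmn => by
      rw [hF (mul_ne_zero hm hn), hF hm, hF hn, hfmul _ _ hmn]⟩
  have hmul :=
    ((isMultiplicative_moebiusDivPow s).expand hr).mul (isMultiplicative_zeta.natCast (R := ℝ))
  suffices F = expand r (moebiusDivPow s) * ζ by rw [← hF hn, this]
  refine (IsMultiplicative.eq_iff_eq_on_prime_powers F hFmul _ hmul).2 fun p i hp => ?_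
  rcases Nat.eq_zero_or_pos i with rfl | hi
  · simp only [pow_zero, hFmul.map_one, hmul.map_one]
  · rw [hF (pow_ne_zero i hp.ne_zero), hfpp p i hp hi,
      expand_moebiusDivPow_mul_zeta_apply_prime_pow hr s hp]

theorem tsum_moebius_div_pow {s : ℕ} (hs : 1 < s) :
    ∑' n : ℕ, (μ n : ℝ) / (n : ℝ) ^ s = (∑' n : ℕ, 1 / (n : ℝ) ^ s)⁻¹ := by
  have hs' : 1 < (s : ℂ).re := by simpa using hs
  have hkey := LSeries_one_mul_Lseries_moebius hs'
  rw [LSeries_one_eq_riemannZeta hs', zeta_nat_eq_tsum_of_gt_one hs, LSeries] at hkey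
  have hterm (n : ℕ) : LSeries.term (fun n => (μ n : ℂ)) s n = ((μ n / (n : ℝ) ^ s : ℝ) : ℂ) := by
    rcases eq_or_ne n 0 with rfl | hn
    · simp
    · simp [LSeries.term_of_ne_zero hn, Complex.cpow_natCast]
  simp_rw [hterm] at hkey
  rw [← Complex.ofReal_tsum, show ∑' n : ℕ, 1 / (n : ℂ) ^ s = ((∑' n : ℕ, 1 / (n : ℝ) ^ s : ℝ) : ℂ)
    by push_cast [Complex.ofReal_tsum]; rfl] at hkey
  exact eq_inv_of_mul_eq_one_right (by exact_mod_cast hkey)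

theorem sum_Ioc_rpow_mul_expand_mul_zeta_eq_tsum {r : ℕ} (hr : r ≠ 0) (h : ArithmeticFunction ℝ)
    (a : ℝ) (N : ℕ) :
    ∑ n ∈ Ioc 0 N, (n : ℝ) ^ a * (expand r h * ζ) n =
      ∑' k, h k * (((k ^ r : ℕ) : ℝ) ^ a * ∑ j ∈ Ioc 0 (N / k ^ r), (j : ℝ) ^ a) := by
  rw [sum_Ioc_rpow_mul_mul_zeta,
    ← tsum_expand_mul hr fun d => (d : ℝ) ^ a * ∑ j ∈ Ioc 0 (N / d), (j : ℝ) ^ a, tsum_eq_sum]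
  intro d hd
  rcases Nat.eq_zero_or_pos d with rfl | hd0
  · rw [map_zero, zero_mul]
  · rw [Nat.div_eq_of_lt (by simpa [hd0] using hd), Ioc_self, sum_empty, mul_zero, mul_zero]

theorem abs_sum_Ioc_rpow_mul_expand_moebiusDivPow_mul_zeta_sub_le {r s : ℕ} (hr : r ≠ 0)
    (hs : 1 < s) {a : ℝ} (ha : 0 ≤ a) {Y : ℝ} (hY : 0 ≤ Y) :
    |∑ n ∈ Ioc 0 ⌊Y⌋₊, (n : ℝ) ^ a *
          (expand r (moebiusDivPow s) * ζ) n -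
        (∑' n : ℕ, 1 / (n : ℝ) ^ (r + s))⁻¹ * Y ^ (a + 1) / (a + 1)| ≤
      (∑' n : ℕ, 1 / (n : ℝ) ^ s) * Y ^ a := by
  set t : ℕ → ℝ := fun k => μ k / (k : ℝ) ^ s *
    (((k ^ r : ℕ) : ℝ) ^ a * ∑ j ∈ Ioc 0 (⌊Y⌋₊ / k ^ r), (j : ℝ) ^ a)
  set m : ℕ → ℝ := fun k => μ k / (k : ℝ) ^ (r + s) * (Y ^ (a + 1) / (a + 1))
  have hmain (k : ℕ) : μ k / (k : ℝ) ^ s * (Y ^ (a + 1) / ((a + 1) * (k ^ r : ℕ))) = m k := by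
    rcases eq_or_ne k 0 with rfl | hk
    · simp [m]
    · simp only [m, Nat.cast_pow, pow_add]
      field_simp
  have hbound (k : ℕ) : ‖t k - m k‖ ≤ Y ^ a * (1 / (k : ℝ) ^ s) := by
    rw [← hmain, ← mul_sub, norm_mul, mul_comm]
    gcongr
    · exact abs_rpow_mul_sum_Ioc_div_sub_le ha hY _
    · rw [norm_div, norm_pow, Real.norm_natCast, Real.norm_eq_abs]
      gcongr
      exact_mod_cast abs_moebius_le_one
  have hsum := ((Real.summable_one_div_nat_pow.2 hs).hasSum).mul_left (Y ^ a)
  have hm : Summable m := by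
    refine Summable.of_norm_bounded
      ((Real.summable_one_div_nat_pow.2 (by omega : 1 < r + s)).mul_right ‖Y ^ (a + 1) / (a + 1)‖)
      fun k => ?_
    rw [norm_mul, norm_div, norm_pow, Real.norm_natCast, Real.norm_eq_abs (μ k : ℝ)]
    gcongr
    exact_mod_cast abs_moebius_le_one
  have ht : Summable t := by
    simpa using (Summable.of_norm_bounded hsum.summable hbound).add hm
  rw [sum_Ioc_rpow_mul_expand_mul_zeta_eq_tsum hr, ← tsum_moebius_div_pow (by omega : 1 < r + s),
    mul_div_assoc, ← tsum_mul_right]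
  simp_rw [moebiusDivPow_apply (by omega : s ≠ 0)]
  calc |∑' k, t k - ∑' k, m k| = ‖∑' k, (t k - m k)‖ := by
        rw [ht.tsum_sub hm, Real.norm_eq_abs]
    _ ≤ Y ^ a * ∑' n : ℕ, 1 / (n : ℝ) ^ s := tsum_of_norm_bounded hsum hbound
    _ = (∑' n : ℕ, 1 / (n : ℝ) ^ s) * Y ^ a := mul_comm _ _

end ArithmeticFunction

/-- Asymptotic for the weighted partial sums `∑_{B ≤ Y} B^α f(B)`, where `f` is the
multiplicative function with `f(p^r) = 1 - p^{-4}` for `r ≥ 6` and `f(p^r) = 1` for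
`1 ≤ r ≤ 5`: the sum equals `ζ(10)⁻¹ Y^{α+1}/(α+1) + O(Y^α)`. -/
theorem dirichlet_f_asymptotic (α : ℚ) (hα : 0 ≤ α) (f : ℕ → ℝ)
    (hf1 : f 1 = 1)
    (hfmul : ∀ m n : ℕ, Nat.Coprime m n → f (m * n) = f m * f n)
    (hfpp : ∀ p r : ℕ, p.Prime → 1 ≤ r →
      f (p ^ r) = if 6 ≤ r then 1 - ((p : ℝ) ^ (4 : ℕ))⁻¹ else 1) :
    ∃ C : ℝ, 0 < C ∧ ∀ Y : ℝ, 1 ≤ Y →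
      |(∑ B ∈ Finset.Icc 1 ⌊Y⌋₊, (B : ℝ) ^ (α : ℝ) * f B) -
          (∑' m : ℕ, ((m : ℝ) + 1) ^ (-10 : ℤ))⁻¹ * Y ^ ((α : ℝ) + 1) / ((α : ℝ) + 1)|
        ≤ C * Y ^ (α : ℝ) := by
  refine ⟨π ^ 4 / 90, by positivity, fun Y hY => ?_⟩
  have hsum : ∑ B ∈ Icc 1 ⌊Y⌋₊, (B : ℝ) ^ (α : ℝ) * f B =
      ∑ n ∈ Ioc 0 ⌊Y⌋₊, (n : ℝ) ^ (α : ℝ) *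
        (ArithmeticFunction.expand 6 (ArithmeticFunction.moebiusDivPow 4) * ζ) n :=
    sum_congr (Icc_add_one_left_eq_Ioc 0 _) fun n hn => by
      rw [ArithmeticFunction.eq_expand_moebiusDivPow_mul_zeta_apply (by norm_num) hf1 hfmul hfpp
        (mem_Ioc.1 hn).1.ne']
  have hzeta : ∑' m : ℕ, ((m : ℝ) + 1) ^ (-10 : ℤ) = ∑' n : ℕ, 1 / (n : ℝ) ^ (6 + 4) := by
    rw [(Real.summable_one_div_nat_pow.2 (by norm_num)).tsum_eq_zero_add]
    simp [zpow_neg]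
  rw [hsum, hzeta, ← hasSum_zeta_four.tsum_eq]
  exact ArithmeticFunction.abs_sum_Ioc_rpow_mul_expand_moebiusDivPow_mul_zeta_sub_le
    (by norm_num) (by norm_num) (by exact_mod_cast hα) (by linarith)
end

section
/- Let g : \mathbb{Z}_{>0} \to \mathbb{R} be the multiplicative function defined on prime powers by g(p^r) = p^4 if r \ge 6 and g(p^r) = 1 if 1 \le r \le 5 (and g(1) = 1). Then there is a constant C > 0 such that for every real Y \ge 1, |\sum_{1 \le B \le Y} g(B) - (\prod_{p prime}(1 + (p^4-1)/p^6))\,Y| \le C\,Y^{5/6}, where the sum is over positive integers B \le Y. -/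
/-!
Write `g = h * ζ`, where `h` is the multiplicative function with `h (p ^ 6) = p ^ 4 - 1` and
`h (p ^ k) = 0` for `k ∉ {0, 6}`. Then `∑_{B ≤ Y} g B = ∑_{m ≤ Y^{1/6}} h (m ^ 6) ⌊Y / m ^ 6⌋`.
Since `0 ≤ h (m ^ 6) ≤ m ^ 4`, replacing each floor by `Y / m ^ 6` costs at most `Y^{5/6}`, and
completing the sum to `∑_m h (m ^ 6) / m ^ 6 = ∑_n h n / n`, which is the Euler product, costs at
most `Y ∑_{m > Y^{1/6}} m⁻² ≤ 2 Y^{5/6}`.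
-/

noncomputable section

open Finset

namespace ArithmeticFunction

variable {R : Type*}

def ofPrimePowers [CommMonoidWithZero R] (F : ℕ → ℕ → R) : ArithmeticFunction R :=
  ⟨fun n => if n = 0 then 0 else n.factorization.prod F, if_pos rfl⟩

section

variable [CommMonoidWithZero R] {F : ℕ → ℕ → R}

theorem ofPrimePowers_apply {n : ℕ} (hn : n ≠ 0) :
    ofPrimePowers F n = n.factorization.prod F :=
  if_neg hn

theorem isMultiplicative_ofPrimePowers : (ofPrimePowers F).IsMultiplicative := by
  refine IsMultiplicative.iff_ne_zero.2 ⟨by simp [ofPrimePowers_apply], fun hm hn hmn => ?_⟩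
  rw [ofPrimePowers_apply (mul_ne_zero hm hn), ofPrimePowers_apply hm, ofPrimePowers_apply hn,
    Nat.factorization_mul_of_coprime hmn, Finsupp.prod_add_index_of_disjoint]
  simpa only [Nat.support_factorization] using hmn.disjoint_primeFactors

theorem ofPrimePowers_apply_prime_pow (hF : ∀ p, F p 0 = 1) {p : ℕ} (hp : p.Prime) (k : ℕ) :
    ofPrimePowers F (p ^ k) = F p k := by
  rw [ofPrimePowers_apply (pow_ne_zero _ hp.ne_zero), hp.factorization_pow,
    Finsupp.prod_single_index (hF p)]

theorem ofPrimePowers_eq_zero_of_forall_ne_pow {d : ℕ} (hF : ∀ p k, ¬d ∣ k → F p k = 0) {n : ℕ}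
    (hn : ∀ m, n ≠ m ^ d) : ofPrimePowers F n = 0 := by
  rcases eq_or_ne n 0 with rfl | h0
  · exact (ofPrimePowers F).map_zero
  obtain ⟨p, hp, hpd⟩ : ∃ p ∈ n.factorization.support, ¬d ∣ n.factorization p := by
    by_contra! hdvd
    refine hn (n.factorization.prod fun p k => p ^ (k / d)) ?_
    conv_lhs => rw [← Nat.prod_factorization_pow_eq_self h0]
    rw [Finsupp.prod, Finsupp.prod, ← prod_pow]
    exact prod_congr rfl fun p hp => by rw [← pow_mul, Nat.div_mul_cancel (hdvd p hp)]
  rw [ofPrimePowers_apply h0]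
  exact prod_eq_zero hp (hF _ _ hpd)

end

theorem ofPrimePowers_nonneg [CommSemiring R] [PartialOrder R] [IsOrderedRing R]
    {F : ℕ → ℕ → R} (hF : ∀ p k, p.Prime → 0 ≤ F p k) (n : ℕ) : 0 ≤ ofPrimePowers F n := by
  rcases eq_or_ne n 0 with rfl | h0
  · simp
  rw [ofPrimePowers_apply h0]
  exact prod_nonneg fun p hp => hF _ _ (Nat.prime_of_mem_primeFactors (by simpa using hp))

end ArithmeticFunction

theorem Nat.multiplicative_le_of_le_on_prime_powers {f g : ℕ → ℝ}
    (hf : ∀ m n, m.Coprime n → f (m * n) = f m * f n) (hf1 : f 1 = 1)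
    (hg : ∀ m n, m.Coprime n → g (m * n) = g m * g n) (hg1 : g 1 = 1)
    (hf0 : ∀ p k, p.Prime → 0 ≤ f (p ^ k)) (hfg : ∀ p k, p.Prime → f (p ^ k) ≤ g (p ^ k))
    {n : ℕ} (hn : n ≠ 0) : f n ≤ g n := by
  rw [Nat.multiplicative_factorization f hf hf1 hn, Nat.multiplicative_factorization g hg hg1 hn]
  have hprime : ∀ p ∈ n.factorization.support, p.Prime := fun p hp =>
    Nat.prime_of_mem_primeFactors (by simpa using hp)
  exact prod_le_prod (fun p hp => hf0 _ _ (hprime p hp)) fun p hp => hfg _ _ (hprime p hp)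

theorem Finset.sum_Ioc_eq_sum_Ioc_pow {M : Type*} [AddCommMonoid M] {f : ℕ → M} {d N K : ℕ}
    (hd : d ≠ 0) (hf : ∀ n, (∀ m, n ≠ m ^ d) → f n = 0) (hK : ∀ m, m ^ d ≤ N ↔ m ≤ K) :
    ∑ n ∈ Ioc 0 N, f n = ∑ m ∈ Ioc 0 K, f (m ^ d) := by
  symm
  refine sum_of_injOn (· ^ d) (Nat.pow_left_injective hd).injOn ?_ ?_ fun _ _ => rfl
  · intro m hm
    simp only [coe_Ioc, Set.mem_Ioc] at hm ⊢
    exact ⟨pow_pos hm.1 d, (hK m).2 hm.2⟩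
  · intro n hn hn'
    refine hf n fun m hnm => hn' ⟨m, ?_, hnm.symm⟩
    subst hnm
    rw [mem_Ioc] at hn
    simp only [coe_Ioc, Set.mem_Ioc]
    exact ⟨Nat.pos_of_ne_zero (by rintro rfl; simp [hd] at hn), (hK m).1 hn.2⟩

theorem Nat.pow_le_floor_pow_iff {t : ℝ} (ht : 0 ≤ t) {d : ℕ} (hd : d ≠ 0) (m : ℕ) :
    m ^ d ≤ ⌊t ^ d⌋₊ ↔ m ≤ ⌊t⌋₊ := by
  rw [Nat.le_floor_iff (by positivity), Nat.le_floor_iff ht, Nat.cast_pow,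
    pow_le_pow_iff_left₀ (Nat.cast_nonneg m) ht hd]

theorem abs_sum_mul_floor_div_sub_le {ι : Type*} {s : Finset ι} {w : ι → ℝ} {q : ι → ℕ}
    {B Y : ℝ} (hY : 0 ≤ Y) (hw0 : ∀ i ∈ s, 0 ≤ w i) (hwB : ∀ i ∈ s, w i ≤ B) :
    |∑ i ∈ s, w i * ((⌊Y⌋₊ / q i : ℕ) : ℝ) - Y * ∑ i ∈ s, w i / q i| ≤ #s * B := by
  rw [mul_sum, ← sum_sub_distrib, ← nsmul_eq_mul, ← sum_const]
  refine (abs_sum_le_sum_abs _ _).trans (sum_le_sum fun i hi => ?_)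
  have hfloor : |((⌊Y⌋₊ / q i : ℕ) : ℝ) - Y / q i| ≤ 1 := by
    rw [← Nat.floor_div_natCast, abs_sub_comm,
      abs_of_nonneg (sub_nonneg.2 (Nat.floor_le (by positivity)))]
    exact (sub_lt_iff_lt_add'.2 (Nat.lt_floor_add_one _)).le
  calc |w i * ((⌊Y⌋₊ / q i : ℕ) : ℝ) - Y * (w i / q i)|
      = w i * |((⌊Y⌋₊ / q i : ℕ) : ℝ) - Y / q i| := by
        rw [mul_div_left_comm, ← mul_sub, abs_mul, abs_of_nonneg (hw0 i hi)]
    _ ≤ B * 1 := mul_le_mul (hwB i hi) hfloor (abs_nonneg _) ((hw0 i hi).trans (hwB i hi))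
    _ = B := mul_one B

/-- At `m = 0` the bound reads `f 0 ≤ 0⁻¹ = 0`, so it forces `f 0 = 0`. -/
theorem abs_tsum_sub_sum_Ioc_le_of_le_inv_sq {f : ℕ → ℝ} (hf0 : ∀ m, 0 ≤ f m)
    (hf : ∀ m, f m ≤ (m ^ 2 : ℝ)⁻¹) (K : ℕ) :
    |∑' m, f m - ∑ m ∈ Ioc 0 K, f m| ≤ 2 / (K + 1) := by
  have hsum : Summable f := .of_nonneg_of_le hf0 hf (Real.summable_nat_pow_inv.2 one_lt_two)
  have hzero : f 0 = 0 := le_antisymm (by simpa using hf 0) (hf0 0)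
  have hrange : ∑ m ∈ range (K + 1), f m = ∑ m ∈ Ioc 0 K, f m := by
    rw [sum_range_succ', hzero, add_zero, range_eq_Ico, sum_Ico_add']
    rfl
  rw [← hsum.sum_add_tsum_nat_add (K + 1), hrange, add_sub_cancel_left,
    abs_of_nonneg (tsum_nonneg fun _ => hf0 _)]
  refine Real.tsum_le_of_sum_range_le (fun _ => hf0 _) fun n => ?_
  calc ∑ i ∈ range n, f (i + (K + 1)) ≤ ∑ i ∈ range n, (((i + (K + 1) : ℕ) : ℝ) ^ 2)⁻¹ :=
        sum_le_sum fun i _ => hf _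
    _ = ∑ i ∈ Ioo K (n + (K + 1)), ((i : ℝ) ^ 2)⁻¹ := by
        rw [range_eq_Ico, sum_Ico_add' (fun i : ℕ => ((i : ℝ) ^ 2)⁻¹), zero_add,
          Ico_add_one_left_eq_Ioo]
    _ ≤ 2 / (K + 1) := sum_Ioo_inv_sq_le K _

namespace DirichletG

open ArithmeticFunction
open scoped ArithmeticFunction.zeta

def localFactor (p k : ℕ) : ℝ := if k = 0 then 1 else if k = 6 then (p : ℝ) ^ 4 - 1 else 0

def h : ArithmeticFunction ℝ := ofPrimePowers localFactor

theorem isMultiplicative_h : h.IsMultiplicative := isMultiplicative_ofPrimePowers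

theorem h_apply_prime_pow {p : ℕ} (hp : p.Prime) (k : ℕ) : h (p ^ k) = localFactor p k :=
  ofPrimePowers_apply_prime_pow (fun _ => rfl) hp k

theorem h_nonneg (n : ℕ) : 0 ≤ h n := by
  refine ofPrimePowers_nonneg (fun p k hp => ?_) n
  have : (1 : ℝ) ≤ (p : ℝ) ^ 4 := one_le_pow₀ (by exact_mod_cast hp.one_lt.le)
  unfold localFactor
  split_ifs <;> linarith

theorem h_eq_zero {n : ℕ} (hn : ∀ m, n ≠ m ^ 6) : h n = 0 :=
  ofPrimePowers_eq_zero_of_forall_ne_pow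
    (fun p k hk => by unfold localFactor; split_ifs <;> simp_all) hn

theorem h_pow_six_le {m : ℕ} (hm : m ≠ 0) : h (m ^ 6) ≤ (m : ℝ) ^ 4 := by
  refine Nat.multiplicative_le_of_le_on_prime_powers (f := fun m => h (m ^ 6))
    (g := fun m => (m : ℝ) ^ 4)
    (fun a b hab => by
      rw [mul_pow]; exact isMultiplicative_h.map_mul_of_coprime (Nat.Coprime.pow 6 6 hab))
    (by simp [isMultiplicative_h.map_one]) (fun a b _ => by push_cast; ring) (by simp)
    (fun p k _ => h_nonneg _) (fun p k hp => ?_) hm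
  simp only [← pow_mul, h_apply_prime_pow hp, localFactor, Nat.cast_pow]
  rcases k with _ | _ | k
  · simp
  · simp
  · rw [if_neg (by omega), if_neg (by omega)]
    positivity

theorem mul_zeta_apply_prime_pow {p : ℕ} (hp : p.Prime) (k : ℕ) :
    (h * ↑ζ) (p ^ k) = if 6 ≤ k then (p : ℝ) ^ 4 else 1 := by
  rw [coe_mul_zeta_apply, Nat.sum_divisors_prime_pow hp]
  have hsplit : ∀ i, localFactor p i =
      (if i = 0 then 1 else 0) + (if i = 6 then (p : ℝ) ^ 4 - 1 else 0) := by
    intro i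
    unfold localFactor
    split_ifs <;> simp_all
  simp only [h_apply_prime_pow hp, hsplit, sum_add_distrib, sum_ite_eq', mem_range]
  split_ifs <;> first | omega | ring

theorem eq_mul_zeta {g : ℕ → ℝ} (hg1 : g 1 = 1)
    (hgmul : ∀ m n : ℕ, Nat.Coprime m n → g (m * n) = g m * g n)
    (hgpp : ∀ p r : ℕ, p.Prime → 1 ≤ r → g (p ^ r) = if 6 ≤ r then (p : ℝ) ^ 4 else 1)
    {n : ℕ} (hn : n ≠ 0) : g n = (h * ↑ζ) n := by
  rw [Nat.multiplicative_factorization g hgmul hg1 hn,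
    (isMultiplicative_h.mul isMultiplicative_zeta.natCast).multiplicative_factorization _ hn]
  refine Finsupp.prod_congr fun p hp => ?_
  have hp' : p.Prime := Nat.prime_of_mem_primeFactors (by simpa using hp)
  rw [hgpp p _ hp' (Nat.one_le_iff_ne_zero.2 (Finsupp.mem_support_iff.1 hp)),
    mul_zeta_apply_prime_pow hp']

theorem sum_Icc_eq_sum_Ioc_pow_six {g : ℕ → ℝ} (hg1 : g 1 = 1)
    (hgmul : ∀ m n : ℕ, Nat.Coprime m n → g (m * n) = g m * g n)
    (hgpp : ∀ p r : ℕ, p.Prime → 1 ≤ r → g (p ^ r) = if 6 ≤ r then (p : ℝ) ^ 4 else 1)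
    {N K : ℕ} (hK : ∀ m, m ^ 6 ≤ N ↔ m ≤ K) :
    ∑ B ∈ Icc 1 N, g B = ∑ m ∈ Ioc 0 K, h (m ^ 6) * ((N / m ^ 6 : ℕ) : ℝ) :=
  calc ∑ B ∈ Icc 1 N, g B = ∑ n ∈ Ioc 0 N, (h * ↑ζ) n :=
        sum_congr rfl fun n hn => eq_mul_zeta hg1 hgmul hgpp (by simp at hn; omega)
    _ = ∑ n ∈ Ioc 0 N, h n * ((N / n : ℕ) : ℝ) := sum_Ioc_mul_zeta_eq_sum h N
    _ = _ := sum_Ioc_eq_sum_Ioc_pow (by norm_num)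
        (fun n hn => by rw [h_eq_zero hn, zero_mul]) hK

theorem h_pow_six_div_nonneg (m : ℕ) : 0 ≤ h (m ^ 6) / (m : ℝ) ^ 6 :=
  div_nonneg (h_nonneg _) (by positivity)

theorem h_pow_six_div_le (m : ℕ) : h (m ^ 6) / (m : ℝ) ^ 6 ≤ ((m : ℝ) ^ 2)⁻¹ := by
  rcases eq_or_ne m 0 with rfl | hm
  · simp
  calc h (m ^ 6) / (m : ℝ) ^ 6 ≤ (m : ℝ) ^ 4 / (m : ℝ) ^ 6 := by
        gcongr; exact h_pow_six_le hm
    _ = ((m : ℝ) ^ 2)⁻¹ := by field_simp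

theorem tsum_h_prime_pow_div {p : ℕ} (hp : p.Prime) :
    ∑' e, h (p ^ e) / ((p ^ e : ℕ) : ℝ) = 1 + ((p : ℝ) ^ 4 - 1) / (p : ℝ) ^ 6 := by
  rw [tsum_eq_sum (s := {0, 6}) fun e he => ?_, sum_pair (by norm_num)]
  · simp [h_apply_prime_pow hp, localFactor, isMultiplicative_h.map_one]
  · simp only [mem_insert, mem_singleton, not_or] at he
    simp [h_apply_prime_pow hp, localFactor, he]

theorem tprod_eq_tsum_h_pow_six_div :
    ∏' p : Nat.Primes, (1 + ((p : ℝ) ^ 4 - 1) / (p : ℝ) ^ 6) =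
      ∑' m : ℕ, h (m ^ 6) / (m : ℝ) ^ 6 := by
  have hinj : Function.Injective (· ^ 6 : ℕ → ℕ) := Nat.pow_left_injective (by norm_num)
  have hoff : ∀ n ∉ Set.range (· ^ 6 : ℕ → ℕ), h n / (n : ℝ) = 0 := fun n hn => by
    rw [h_eq_zero fun m hm => hn ⟨m, hm.symm⟩, zero_div]
  have hsum : Summable fun n : ℕ => ‖h n / (n : ℝ)‖ := by
    refine (hinj.summable_iff fun n hn => by rw [hoff n hn, norm_zero]).1 ?_
    refine .of_nonneg_of_le (fun _ => norm_nonneg _) (fun m => ?_)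
      (Real.summable_nat_pow_inv.2 one_lt_two)
    rw [Function.comp_apply, Real.norm_of_nonneg (by exact_mod_cast h_pow_six_div_nonneg m)]
    exact_mod_cast h_pow_six_div_le m
  rw [← tprod_congr fun p : Nat.Primes => tsum_h_prime_pow_div p.2,
    EulerProduct.eulerProduct_tprod (f := fun n => h n / (n : ℝ))
      (by simp [isMultiplicative_h.map_one])
      (fun {m n} hmn => by simp [isMultiplicative_h.map_mul_of_coprime hmn, mul_div_mul_comm])
      hsum (by simp),
    ← hinj.tsum_eq fun n hn => by_contra fun h' => hn (hoff n h')]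
  simp

theorem abs_sum_sub_tprod_mul_le {g : ℕ → ℝ} (hg1 : g 1 = 1)
    (hgmul : ∀ m n : ℕ, Nat.Coprime m n → g (m * n) = g m * g n)
    (hgpp : ∀ p r : ℕ, p.Prime → 1 ≤ r → g (p ^ r) = if 6 ≤ r then (p : ℝ) ^ 4 else 1)
    {t : ℝ} (ht : 0 ≤ t) :
    |∑ B ∈ Icc 1 ⌊t ^ 6⌋₊, g B -
        (∏' p : Nat.Primes, (1 + ((p : ℝ) ^ 4 - 1) / (p : ℝ) ^ 6)) * t ^ 6| ≤ 3 * t ^ 5 := by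
  set K := ⌊t⌋₊
  rw [sum_Icc_eq_sum_Ioc_pow_six hg1 hgmul hgpp (Nat.pow_le_floor_pow_iff ht (by norm_num)),
    tprod_eq_tsum_h_pow_six_div]
  set S := ∑ m ∈ Ioc 0 K, h (m ^ 6) * ((⌊t ^ 6⌋₊ / m ^ 6 : ℕ) : ℝ)
  set P := ∑ m ∈ Ioc 0 K, h (m ^ 6) / (m : ℝ) ^ 6
  set c := ∑' m : ℕ, h (m ^ 6) / (m : ℝ) ^ 6
  have hfloors : |S - t ^ 6 * P| ≤ K * K ^ 4 := by
    have := abs_sum_mul_floor_div_sub_le (s := Ioc 0 K) (q := (· ^ 6)) (B := (K : ℝ) ^ 4)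
      (Y := t ^ 6) (by positivity) (fun m _ => h_nonneg _) fun m hm => by
        rw [mem_Ioc] at hm
        exact (h_pow_six_le hm.1.ne').trans (by gcongr; exact hm.2)
    simpa using this
  have htail : |c - P| ≤ 2 / (K + 1) :=
    abs_tsum_sub_sum_Ioc_le_of_le_inv_sq h_pow_six_div_nonneg h_pow_six_div_le K
  have hK : (K : ℝ) * K ^ 4 ≤ t ^ 5 := by
    rw [← pow_succ']; gcongr; exact Nat.floor_le ht
  have hK' : t ^ 6 * (2 / (K + 1)) ≤ 2 * t ^ 5 := by
    rw [mul_div_assoc', div_le_iff₀ (by positivity)]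
    nlinarith [mul_le_mul_of_nonneg_left (Nat.lt_floor_add_one t).le (pow_nonneg ht 5)]
  calc |S - c * t ^ 6| = |(S - t ^ 6 * P) - t ^ 6 * (c - P)| := by ring_nf
    _ ≤ |S - t ^ 6 * P| + |t ^ 6 * (c - P)| := abs_sub _ _
    _ = |S - t ^ 6 * P| + t ^ 6 * |c - P| := by rw [abs_mul, abs_of_nonneg (pow_nonneg ht 6)]
    _ ≤ K * K ^ 4 + t ^ 6 * (2 / (K + 1)) := by gcongr
    _ ≤ 3 * t ^ 5 := by linarith

end DirichletG

/-- Asymptotic for the partial sums `∑_{B ≤ Y} g(B)`, where `g` is the multiplicative function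
with `g(p^r) = p⁴` for `r ≥ 6` and `g(p^r) = 1` for `1 ≤ r ≤ 5`: the sum equals
`(∏_p (1 + (p⁴-1)/p⁶)) Y + O(Y^{5/6})`. -/
theorem dirichlet_g_asymptotic (g : ℕ → ℝ)
    (hg1 : g 1 = 1)
    (hgmul : ∀ m n : ℕ, Nat.Coprime m n → g (m * n) = g m * g n)
    (hgpp : ∀ p r : ℕ, p.Prime → 1 ≤ r →
      g (p ^ r) = if 6 ≤ r then (p : ℝ) ^ (4 : ℕ) else 1) :
    ∃ C : ℝ, 0 < C ∧ ∀ Y : ℝ, 1 ≤ Y →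
      |(∑ B ∈ Finset.Icc 1 ⌊Y⌋₊, g B) -
          (∏' p : Nat.Primes, (1 + ((p : ℝ) ^ 4 - 1) / (p : ℝ) ^ 6)) * Y|
        ≤ C * Y ^ ((5 : ℝ) / 6) := by
  refine ⟨3, by norm_num, fun Y hY => ?_⟩
  obtain ⟨t, ht, rfl⟩ : ∃ t : ℝ, 0 ≤ t ∧ Y = t ^ 6 :=
    ⟨Y ^ (6 : ℝ)⁻¹, Real.rpow_nonneg (by linarith) _, by
      rw [← Real.rpow_natCast, ← Real.rpow_mul (by linarith)]; norm_num⟩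
  have ht56 : (t ^ 6) ^ ((5 : ℝ) / 6) = t ^ 5 := by
    rw [← Real.rpow_natCast, ← Real.rpow_mul ht]; norm_num
  rw [ht56]
  exact DirichletG.abs_sum_sub_tprod_mul_le hg1 hgmul hgpp ht

end
end
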